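/- arXiv:1703.09618 — 15 statements merged into one kernel-verified Lean document; each statement's English description precedes it below -/
import Mathlib

section
/- For all x in (0, π/2), (1 - cos(x)/cos(x/2))/x² < 4/π². -/
open Real

/-!
With `t = x / 2` the claim reads `F t := π² (cos t - cos 2t) - 16 t² cos t < 0` on `(0, π/4)`,
and `F` vanishes at both ends of that interval, so the estimate is sharp at `x = π/2`.
Away from `π/4` we use `cos t - cos 2t = (1 - cos t)(1 + 2 cos t)` with `1 - cos t ≤ t²/2`.
Near `π/4`, writing `t = π/4 - s`, the claim becomes
`8s(π - 2s) cos (π/4 - s) < π² sin 2s`, which follows from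
`cos s + sin s < 1 + s` and `sin 2s > 2s - 4s³/3`.
-/

lemma cos_sub_cos_two_mul (t : ℝ) : cos t - cos (2 * t) = (1 - cos t) * (1 + 2 * cos t) := by
  rw [cos_two_mul]; ring

lemma pi_sq_mul_cos_sub_cos_two_mul_lt_of_pi_sq_mul_lt {t : ℝ} (ht : t ≠ 0)
    (hc : π ^ 2 * (1 + 2 * cos t) < 32 * cos t) :
    π ^ 2 * (cos t - cos (2 * t)) < 16 * t ^ 2 * cos t := by
  have h_one_sub_cos : 1 - cos t ≤ t ^ 2 / 2 := by linarith [one_sub_sq_div_two_le_cos (x := t)]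
  have h_pos : 0 < 1 + 2 * cos t := by nlinarith [pi_pos, pi_le_four, neg_one_le_cos t]
  calc π ^ 2 * (cos t - cos (2 * t)) = (1 - cos t) * (π ^ 2 * (1 + 2 * cos t)) := by
        rw [cos_sub_cos_two_mul]; ring
    _ ≤ t ^ 2 / 2 * (π ^ 2 * (1 + 2 * cos t)) := by gcongr
    _ < t ^ 2 / 2 * (32 * cos t) := by gcongr
    _ = 16 * t ^ 2 * cos t := by ring

lemma two_mul_sqrt_two_mul_pi_sub_lt {s : ℝ} (hs0 : 0 ≤ s) (hs1 : s ≤ 3 / 16) :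
    2 * √2 * (π - 2 * s) * (1 + s) < π ^ 2 * (1 - 2 / 3 * s ^ 2) := by
  have h_sqrt_two : √2 < 1.415 := by
    rw [sqrt_lt' (by norm_num)]; norm_num
  have h_pi_sub : 0 < π - 2 * s := by linarith [pi_gt_three]
  calc 2 * √2 * (π - 2 * s) * (1 + s) < 2 * 1.415 * (π - 2 * s) * (1 + s) := by gcongr
    _ ≤ 2 * 1.415 * (3.15 - 2 * s) * (1 + s) := by gcongr; exact pi_lt_d2.le
    _ < 3.14 ^ 2 * (1 - 2 / 3 * s ^ 2) := by nlinarith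
    _ ≤ π ^ 2 * (1 - 2 / 3 * s ^ 2) := by
        have : 0 ≤ 1 - 2 / 3 * s ^ 2 := by nlinarith
        gcongr; exact pi_gt_d2.le

lemma pi_sq_mul_cos_sub_cos_two_mul_lt_of_near_pi_div_four {t : ℝ}
    (ht0 : π / 4 - 3 / 16 ≤ t) (ht1 : t < π / 4) :
    π ^ 2 * (cos t - cos (2 * t)) < 16 * t ^ 2 * cos t := by
  obtain ⟨s, rfl⟩ : ∃ s, t = π / 4 - s := ⟨π / 4 - t, by ring⟩
  have hs0 : 0 < s := by linarith
  have h_cos : cos (π / 4 - s) = √2 / 2 * (cos s + sin s) := by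
    rw [cos_sub, cos_pi_div_four, sin_pi_div_four]; ring
  have h_cos_two_mul : cos (2 * (π / 4 - s)) = sin (2 * s) := by
    rw [show 2 * (π / 4 - s) = π / 2 - 2 * s by ring, cos_pi_div_two_sub]
  have h_pi_sub : 0 < π - 2 * s := by linarith [pi_gt_three]
  have h_cos_add_sin : cos s + sin s < 1 + s := by linarith [cos_le_one s, sin_lt hs0]
  have h_sin : 2 * s - 4 / 3 * s ^ 3 < sin (2 * s) := by
    linarith [sin_gt_sub_cube (show 0 < 2 * s by positivity)]
  suffices 8 * s * (π - 2 * s) * (√2 / 2 * (cos s + sin s)) < π ^ 2 * sin (2 * s) by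
    rw [← h_cos, ← h_cos_two_mul] at this; linarith
  calc 8 * s * (π - 2 * s) * (√2 / 2 * (cos s + sin s))
      < 8 * s * (π - 2 * s) * (√2 / 2 * (1 + s)) := by gcongr
    _ = 2 * s * (2 * √2 * (π - 2 * s) * (1 + s)) := by ring
    _ < 2 * s * (π ^ 2 * (1 - 2 / 3 * s ^ 2)) :=
        mul_lt_mul_of_pos_left
          (two_mul_sqrt_two_mul_pi_sub_lt hs0.le (by linarith [pi_lt_d2])) (by positivity)
    _ = π ^ 2 * (2 * s - 4 / 3 * s ^ 3) := by ring
    _ < π ^ 2 * sin (2 * s) := by gcongr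

lemma pi_sq_mul_cos_sub_cos_two_mul_lt {t : ℝ} (ht0 : 0 < t) (ht1 : t < π / 4) :
    π ^ 2 * (cos t - cos (2 * t)) < 16 * t ^ 2 * cos t := by
  rcases le_or_gt t (3 / 5) with ht | ht
  · apply pi_sq_mul_cos_sub_cos_two_mul_lt_of_pi_sq_mul_lt ht0.ne'
    have h_cos : 0.82 ≤ cos t := by nlinarith [one_sub_sq_div_two_le_cos (x := t)]
    have h_pi_sq : π ^ 2 < 3.15 ^ 2 := by gcongr; exact pi_lt_d2
    calc π ^ 2 * (1 + 2 * cos t) < 3.15 ^ 2 * (1 + 2 * cos t) := by gcongr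
      _ ≤ 32 * cos t := by linarith
  · exact pi_sq_mul_cos_sub_cos_two_mul_lt_of_near_pi_div_four (by linarith [pi_lt_d2]) ht1

theorem stmt_0 (x : ℝ) (hx0 : 0 < x) (hx1 : x < π / 2) :
    (1 - cos x / cos (x / 2)) / x ^ 2 < 4 / π ^ 2 := by
  have h_cos : 0 < cos (x / 2) := cos_pos_of_mem_Ioo ⟨by linarith [pi_pos], by linarith⟩
  have key := pi_sq_mul_cos_sub_cos_two_mul_lt (t := x / 2) (by linarith) (by linarith)
  rw [show 2 * (x / 2) = x by ring] at key
  rw [one_sub_div h_cos.ne', div_div, div_lt_div_iff₀ (by positivity) (by positivity)]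
  nlinarith [key]
end

section
/- For all x in (0, π/2), (1 - cos(x)/cos(x/2))/x² > 3/8. -/
open Real

theorem stmt_1 (x : ℝ) (hx0 : 0 < x) (hx1 : x < π / 2) :
    (1 - cos x / cos (x / 2)) / x ^ 2 > 3 / 8 := by
  set t := x / 2 with ht
  have ht0 : 0 < t := by positivity
  have ht1 : t < 1 := by
    have : π < 4 := by nlinarith [Real.pi_lt_d2]
    simp only [ht]; linarith
  have hct : 0 < cos t := by
    apply Real.cos_pos_of_mem_Ioo
    constructor <;> [linarith [Real.pi_pos]; nlinarith [Real.pi_gt_three]]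
  have hcb := Real.cos_bound (x := t) (by rw [abs_of_pos ht0]; linarith)
  rw [abs_of_pos ht0] at hcb
  have hcu : cos t ≤ 1 - t ^ 2 / 2 + t ^ 4 * (5 / 96) := by
    have := abs_le.mp hcb; linarith [this.2]
  have hcl : 1 - t ^ 2 / 2 - t ^ 4 * (5 / 96) ≤ cos t := by
    have := abs_le.mp hcb; linarith [this.1]
  have hx2 : x = 2 * t := by rw [ht]; ring
  have hcx : cos x = 2 * cos t ^ 2 - 1 := by
    rw [hx2, Real.cos_two_mul]
  rw [gt_iff_lt, lt_div_iff₀ (by positivity), hcx, hx2]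
  have ht2 : t ^ 2 < 1 := by nlinarith
  have ht4 : t ^ 4 ≤ t ^ 2 := by nlinarith [sq_nonneg (t^2), sq_nonneg t]
  have key : 12 * t ^ 2 * cos t < 8 * (1 + cos t - 2 * cos t ^ 2) := by
    have h1 : t ^ 2 / 2 - t ^ 4 * (5 / 96) ≤ 1 - cos t := by linarith
    have h2 : 3 - t ^ 2 - t ^ 4 * (5 / 48) ≤ 1 + 2 * cos t := by linarith
    have h3 : (t ^ 2 / 2 - t ^ 4 * (5 / 96)) * (3 - t ^ 2 - t ^ 4 * (5 / 48)) ≤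
        (1 - cos t) * (1 + 2 * cos t) :=
      mul_le_mul h1 h2 (by nlinarith) (by nlinarith [Real.cos_le_one t])
    nlinarith [h3, hcu, mul_pos (mul_pos ht0 ht0) (mul_pos ht0 ht0),
      mul_pos ht0 ht0, sq_nonneg (t^3), mul_pos (mul_pos ht0 ht0) ht0]
  have h1 : 1 - (2 * cos t ^ 2 - 1) / cos t = (1 + cos t - 2 * cos t ^ 2) / cos t := by
    field_simp; ring
  rw [h1, lt_div_iff₀ hct]
  nlinarith [key, hct]
end

section
/- For all x in (0, π/2), (2 - sin(x)/sin(x/2))/x² > (4/π²)(2 - √2). -/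
open Real

lemma key_sin {a b : ℝ} (ha : 0 < a) (hab : a < b) (hb : b ≤ π) :
    a * Real.sin b < b * Real.sin a := by
  have hb0 : 0 < b := ha.trans hab
  have h : (1 - a / b) • Real.sin 0 + (a / b) • Real.sin b <
      Real.sin ((1 - a / b) • (0:ℝ) + (a / b) • b) :=
    strictConcaveOn_sin_Icc.2 ⟨le_rfl, Real.pi_pos.le⟩ ⟨hb0.le, hb⟩ hb0.ne
      (by rw [sub_pos]; exact (div_lt_one hb0).2 hab) (div_pos ha hb0) (by ring)
  simp only [smul_eq_mul, mul_zero, Real.sin_zero, zero_add] at h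
  rw [div_mul_cancel₀ _ hb0.ne'] at h
  calc a * Real.sin b = b * (a / b * Real.sin b) := by field_simp
    _ < b * Real.sin a := mul_lt_mul_of_pos_left h hb0

theorem stmt_3 (x : ℝ) (hx0 : 0 < x) (hx1 : x < π / 2) :
    (2 - sin x / sin (x / 2)) / x ^ 2 > 4 / π ^ 2 * (2 - Real.sqrt 2) := by
  have hpi := Real.pi_pos
  have hs2 : Real.sin (x / 2) ≠ 0 := by
    apply ne_of_gt
    apply Real.sin_pos_of_pos_of_lt_pi (by linarith)
    linarith
  have hsin : Real.sin x / Real.sin (x / 2) = 2 * Real.cos (x / 2) := by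
    rw [show x = 2 * (x / 2) by ring, Real.sin_two_mul]
    field_simp
  have hcos : Real.cos (x / 2) = 1 - 2 * Real.sin (x / 4) ^ 2 := by
    have h := Real.sin_sq_add_cos_sq (x / 4)
    rw [show x / 2 = 2 * (x / 4) by ring, Real.cos_two_mul']
    linarith
  have hsq : Real.sin (π / 8) ^ 2 = (2 - Real.sqrt 2) / 4 := by
    have := Real.sin_sq_eq_half_sub (π / 8)
    rw [show 2 * (π / 8) = π / 4 by ring, Real.cos_pi_div_four] at this
    rw [this]
    have h2 : (0:ℝ) ≤ 2 := by norm_num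
    nlinarith [Real.sq_sqrt h2, Real.sqrt_nonneg (2:ℝ)]
  have hkey : (x / 4) * Real.sin (π / 8) < (π / 8) * Real.sin (x / 4) :=
    key_sin (by linarith) (by linarith) (by linarith)
  have hsa : 0 < Real.sin (x / 4) := by
    apply Real.sin_pos_of_pos_of_lt_pi (by linarith); linarith
  have hsb : 0 < Real.sin (π / 8) := by
    apply Real.sin_pos_of_pos_of_lt_pi (by linarith); linarith
  have hmul : ((x / 4) * Real.sin (π / 8)) ^ 2 < ((π / 8) * Real.sin (x / 4)) ^ 2 := by
    apply pow_lt_pow_left₀ hkey (by positivity) two_ne_zero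
  have hx2 : 0 < x ^ 2 := by positivity
  have hpi2 : 0 < π ^ 2 := by positivity
  have h2 : 2 - Real.sqrt 2 = 4 * Real.sin (π / 8) ^ 2 := by rw [hsq]; ring
  rw [hsin, hcos, gt_iff_lt, h2, div_mul_eq_mul_div, div_lt_div_iff₀ hpi2 hx2]
  nlinarith [hmul]
end

section
/- For every integer p ≥ 3 and all x in (0, π/2), 4/π² < (1 - cos(x)/cos(x/p))/x² < (p² - 1)/(2p²). -/
open Real

/-!
Write `t = x / p`, so that `0 ≤ t ≤ x / 3`.

Lower bound: `cos t ≥ cos (x / 3)`, and the triple-angle formula gives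
`cos x / cos (x / 3) = 1 - 4 sin² (x / 3)`; by concavity of `sin` on `[0, π / 6]`,
`sin (x / 3) > x / π`.

Upper bound: the claim is `cos t * (1 - (x² - t²) / 2) < cos x`. Bounding `cos t` above by its
quartic and `cos x` below by its sextic Taylor polynomial leaves the gap
`(x² - t²) (x² - 5 t²) / 24 - x⁶ / 720 + t⁴ (x² - t²) / 48`, which is positive because
`t² ≤ x² / 9 < x² / 5` and `x < 2`.
-/

namespace Real

theorem cos_le_quartic_taylor {x : ℝ} (hx : 0 ≤ x) : cos x ≤ 1 - x ^ 2 / 2 + x ^ 4 / 24 := by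
  let f (y : ℝ) : ℝ := 1 - y ^ 2 / 2 + y ^ 4 / 24 - cos y
  have hmono : MonotoneOn f (Set.Ici 0) := by
    apply monotoneOn_of_deriv_nonneg (convex_Ici 0) (by fun_prop) (by fun_prop)
    intro y hy
    rw [interior_Ici] at hy
    have hderiv : deriv f y = sin y - (y - y ^ 3 / 6) := by
      simp (disch := fun_prop) only [f, deriv_fun_sub, deriv_fun_add, deriv_const', deriv_div_const,
        deriv_fun_pow, deriv_id'', deriv_cos']
      ring
    rw [hderiv]
    linarith [sin_ge_sub_cube hy.le]
  simpa [f] using hmono Set.self_mem_Ici hx hx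

theorem sin_le_quintic_taylor {x : ℝ} (hx : 0 ≤ x) : sin x ≤ x - x ^ 3 / 6 + x ^ 5 / 120 := by
  let f (y : ℝ) : ℝ := y - y ^ 3 / 6 + y ^ 5 / 120 - sin y
  have hmono : MonotoneOn f (Set.Ici 0) := by
    apply monotoneOn_of_deriv_nonneg (convex_Ici 0) (by fun_prop) (by fun_prop)
    intro y hy
    rw [interior_Ici] at hy
    have hderiv : deriv f y = 1 - y ^ 2 / 2 + y ^ 4 / 24 - cos y := by
      simp (disch := fun_prop) only [f, deriv_fun_sub, deriv_fun_add, deriv_div_const,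
        deriv_fun_pow, deriv_id'', deriv_sin]
      ring
    rw [hderiv]
    linarith [cos_le_quartic_taylor hy.le]
  simpa [f] using hmono Set.self_mem_Ici hx hx

theorem sextic_taylor_le_cos {x : ℝ} (hx : 0 ≤ x) :
    1 - x ^ 2 / 2 + x ^ 4 / 24 - x ^ 6 / 720 ≤ cos x := by
  let f (y : ℝ) : ℝ := cos y - (1 - y ^ 2 / 2 + y ^ 4 / 24 - y ^ 6 / 720)
  have hmono : MonotoneOn f (Set.Ici 0) := by
    apply monotoneOn_of_deriv_nonneg (convex_Ici 0) (by fun_prop) (by fun_prop)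
    intro y hy
    rw [interior_Ici] at hy
    have hderiv : deriv f y = y - y ^ 3 / 6 + y ^ 5 / 120 - sin y := by
      simp (disch := fun_prop) only [f, deriv_fun_sub, deriv_fun_add, deriv_const', deriv_div_const,
        deriv_fun_pow, deriv_id'', deriv_cos']
      ring
    rw [hderiv]
    linarith [sin_le_quintic_taylor hy.le]
  simpa [f] using hmono Set.self_mem_Ici hx hx

theorem mul_lt_sin_of_lt {a y : ℝ} (ha : a ≤ π) (hy : 0 < y) (hya : y < a) :
    sin a / a * y < sin y := by
  have ha0 : 0 < a := hy.trans hya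
  have := strictConcaveOn_sin_Icc.2 (Set.left_mem_Icc.2 pi_pos.le) ⟨ha0.le, ha⟩ ha0.ne
    (show 0 < 1 - y / a by rw [sub_pos, div_lt_one ha0]; exact hya) (show 0 < y / a by positivity)
    (sub_add_cancel 1 (y / a))
  simp only [smul_eq_mul, sin_zero, mul_zero, zero_add, div_mul_cancel₀ y ha0.ne'] at this
  linarith [show sin a / a * y = y / a * sin a by ring]

theorem cos_three_mul_div_cos {y : ℝ} (hy : cos y ≠ 0) :
    cos (3 * y) / cos y = 1 - 4 * sin y ^ 2 := by
  rw [cos_three_mul, sin_sq]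
  field_simp
  ring

theorem quartic_taylor_mul_lt_sextic_taylor {t x : ℝ} (ht : 0 ≤ t) (htx : 3 * t ≤ x)
    (hx0 : 0 < x) (hx : x ≤ 2) :
    (1 - t ^ 2 / 2 + t ^ 4 / 24) * (1 - (x ^ 2 - t ^ 2) / 2) <
      1 - x ^ 2 / 2 + x ^ 4 / 24 - x ^ 6 / 720 := by
  have ht2 : 9 * t ^ 2 ≤ x ^ 2 := by nlinarith
  have hx2 : x ^ 2 ≤ 4 := by nlinarith
  have hprod : 32 * x ^ 4 / 81 ≤ (x ^ 2 - t ^ 2) * (x ^ 2 - 5 * t ^ 2) := by nlinarith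
  have htail : 0 ≤ t ^ 4 * (x ^ 2 - t ^ 2) := by nlinarith [pow_nonneg ht 4]
  have hsix : x ^ 6 ≤ 4 * x ^ 4 := by nlinarith [pow_pos hx0 4]
  nlinarith [pow_pos hx0 4]

theorem four_div_pi_sq_mul_sq_lt_one_sub_cos_div_cos {t x : ℝ} (ht : 0 ≤ t) (htx : 3 * t ≤ x)
    (hx0 : 0 < x) (hx : x < π / 2) : 4 / π ^ 2 * x ^ 2 < 1 - cos x / cos t := by
  have hcos_x : 0 ≤ cos x := cos_nonneg_of_mem_Icc ⟨by linarith [pi_pos], hx.le⟩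
  have hcos_third : 0 < cos (x / 3) := cos_pos_of_mem_Ioo ⟨by linarith [pi_pos], by linarith⟩
  have hcos_le : cos (x / 3) ≤ cos t :=
    cos_le_cos_of_nonneg_of_le_pi ht (by linarith [pi_pos]) (by linarith)
  have hsin : x / π < sin (x / 3) := by
    have := mul_lt_sin_of_lt (a := π / 6) (y := x / 3) (by linarith [pi_pos]) (by positivity)
      (by linarith)
    rwa [sin_pi_div_six, show 1 / 2 / (π / 6) * (x / 3) = x / π by field_simp; ring] at this
  have htriple : cos x / cos (x / 3) = 1 - 4 * sin (x / 3) ^ 2 := by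
    rw [← cos_three_mul_div_cos hcos_third.ne', mul_div_cancel₀ x three_ne_zero]
  calc 4 / π ^ 2 * x ^ 2 = 4 * (x / π) ^ 2 := by ring
    _ < 4 * sin (x / 3) ^ 2 := by gcongr
    _ = 1 - cos x / cos (x / 3) := by rw [htriple]; ring
    _ ≤ 1 - cos x / cos t := by gcongr

theorem one_sub_cos_div_cos_lt {t x : ℝ} (ht : 0 ≤ t) (htx : 3 * t ≤ x) (hx0 : 0 < x)
    (hx : x < π / 2) : 1 - cos x / cos t < (x ^ 2 - t ^ 2) / 2 := by
  have hcos_t : 0 < cos t := cos_pos_of_mem_Ioo ⟨by linarith [pi_pos], by linarith⟩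
  have hcos_x : 0 < cos x := cos_pos_of_mem_Ioo ⟨by linarith [pi_pos], hx⟩
  suffices cos t * (1 - (x ^ 2 - t ^ 2) / 2) < cos x by
    rw [sub_lt_comm, lt_div_iff₀ hcos_t]; linarith
  rcases le_or_gt (1 - (x ^ 2 - t ^ 2) / 2) 0 with hneg | hpos
  · exact (mul_nonpos_of_nonneg_of_nonpos hcos_t.le hneg).trans_lt hcos_x
  calc cos t * (1 - (x ^ 2 - t ^ 2) / 2)
      ≤ (1 - t ^ 2 / 2 + t ^ 4 / 24) * (1 - (x ^ 2 - t ^ 2) / 2) := by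
        gcongr; exact cos_le_quartic_taylor ht
    _ < 1 - x ^ 2 / 2 + x ^ 4 / 24 - x ^ 6 / 720 :=
        quartic_taylor_mul_lt_sextic_taylor ht htx hx0 (by linarith [pi_lt_d2])
    _ ≤ cos x := sextic_taylor_le_cos hx0.le

end Real

theorem stmt_4 (p : ℕ) (hp : 3 ≤ p) (x : ℝ) (hx0 : 0 < x) (hx1 : x < π / 2) :
    4 / π ^ 2 < (1 - cos x / cos (x / p)) / x ^ 2 ∧
      (1 - cos x / cos (x / p)) / x ^ 2 < ((p : ℝ) ^ 2 - 1) / (2 * (p : ℝ) ^ 2) := by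
  have hp3 : (3 : ℝ) ≤ p := by exact_mod_cast hp
  have hp0 : (0 : ℝ) < p := by linarith
  have ht : 0 ≤ x / p := by positivity
  have htx : 3 * (x / p) ≤ x := by
    calc 3 * (x / p) ≤ p * (x / p) := by gcongr
      _ = x := mul_div_cancel₀ x hp0.ne'
  have hx2 : 0 < x ^ 2 := by positivity
  constructor
  · rw [lt_div_iff₀ hx2]
    exact four_div_pi_sq_mul_sq_lt_one_sub_cos_div_cos ht htx hx0 hx1
  · rw [div_lt_iff₀ hx2]
    calc 1 - cos x / cos (x / p) < (x ^ 2 - (x / p) ^ 2) / 2 :=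
          one_sub_cos_div_cos_lt ht htx hx0 hx1
      _ = ((p : ℝ) ^ 2 - 1) / (2 * (p : ℝ) ^ 2) * x ^ 2 := by field_simp
end

section
/- For every integer p ≥ 2 and all x in (0, π/2), (4/π²)(p - 1/sin(π/(2p))) < (p - sin(x)/sin(x/p))/x² < (p² - 1)/(6p). -/
open Real

open Finset in
private lemma sum_id' (n : ℕ) : ∑ k ∈ range n, (k:ℝ) = n*(n-1)/2 := by
  induction n with
  | zero => simp
  | succ n ih => rw [sum_range_succ, ih]; push_cast; ring

open Finset in
private lemma sum_sq' (n : ℕ) : ∑ k ∈ range n, (k:ℝ)^2 = n*(n-1)*(2*n-1)/6 := by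
  induction n with
  | zero => simp
  | succ n ih => rw [sum_range_succ, ih]; push_cast; ring

open Finset in
private lemma sum_m_sq (p : ℕ) :
    ∑ k ∈ range p, ((p:ℝ)-1-2*k)^2 = p*((p:ℝ)^2-1)/3 := by
  have h : ∀ k ∈ range p, ((p:ℝ)-1-2*k)^2
      = 4*(k:ℝ)^2 - (4*((p:ℝ)-1))*(k:ℝ) + ((p:ℝ)-1)^2 := by
    intro k _; ring
  rw [Finset.sum_congr rfl h]
  simp only [Finset.sum_add_distrib, Finset.sum_sub_distrib, ← Finset.mul_sum,
    Finset.sum_const, card_range, nsmul_eq_mul]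
  rw [sum_id', sum_sq']
  ring

/-- sinc is strictly decreasing on (0, π]. -/
private lemma sinc_strict {a b : ℝ} (ha : 0 < a) (hab : a < b) (hb : b ≤ π) :
    sin b * a < sin a * b := by
  have hb0 : 0 < b := ha.trans hab
  have h := strictConcaveOn_sin_Icc.2 (Set.mem_Icc.2 ⟨le_rfl, pi_pos.le⟩)
    (Set.mem_Icc.2 ⟨hb0.le, hb⟩) hb0.ne
    (show (0:ℝ) < 1 - a/b by rw [sub_pos]; exact (div_lt_one hb0).2 hab)
    (show (0:ℝ) < a/b by positivity) (by ring)
  simp only [smul_eq_mul, mul_zero, sin_zero, zero_add] at h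
  rw [div_mul_cancel₀ a hb0.ne'] at h
  have h2 : (a/b) * sin b < sin a := h
  calc sin b * a = ((a/b) * sin b) * b := by field_simp
  _ < sin a * b := mul_lt_mul_of_pos_right h2 hb0

private lemma one_sub_cos_eq (θ : ℝ) : 1 - cos θ = 2 * sin (θ/2)^2 := by
  have := sin_sq_eq_half_sub (θ/2)
  rw [show 2*(θ/2) = θ by ring] at this
  linarith

/-- Strict monotonicity of x ↦ (1 - cos(m x))/x², in cross-multiplied form. -/
private lemma term_strict {m x y : ℝ} (hm : m ≠ 0) (hx : 0 < x) (hxy : x < y)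
    (hmy : |m| * y ≤ π) :
    x^2 * (1 - cos (m*y)) < y^2 * (1 - cos (m*x)) := by
  have hy : 0 < y := hx.trans hxy
  have hm0 : 0 < |m| := abs_pos.2 hm
  have hcx : cos (m*x) = cos (|m| * x) := by
    rw [← Real.cos_abs (m*x), abs_mul, abs_of_pos hx]
  have hcy : cos (m*y) = cos (|m| * y) := by
    rw [← Real.cos_abs (m*y), abs_mul, abs_of_pos hy]
  rw [hcx, hcy, one_sub_cos_eq, one_sub_cos_eq]
  have ha0 : 0 < |m| * x / 2 := by positivity
  have hab : |m| * x / 2 < |m| * y / 2 := by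
    have := mul_lt_mul_of_pos_left hxy hm0
    linarith
  have hbpi : |m| * y / 2 ≤ π := by linarith [hmy, pi_pos.le]
  have key := sinc_strict ha0 hab hbpi
  -- sin(b) * a < sin(a) * b  with a = |m|x/2, b = |m|y/2
  have hsb : 0 ≤ sin (|m| * y / 2) :=
    sin_nonneg_of_nonneg_of_le_pi (by positivity) hbpi
  have hsa : 0 < sin (|m| * x / 2) := by
    nlinarith [mul_pos (mul_pos hm0 hx) (by norm_num : (0:ℝ) < 1/2)]
  -- From key : sin b * (|m|x/2) < sin a * (|m|y/2), divide by |m|/2 > 0: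
  have h3 : x * sin (|m| * y / 2) < y * sin (|m| * x / 2) := by
    have h4 : (|m|/2) * (x * sin (|m| * y / 2)) < (|m|/2) * (y * sin (|m| * x / 2)) := by
      calc (|m|/2) * (x * sin (|m| * y / 2)) = sin (|m| * y / 2) * (|m| * x / 2) := by ring
      _ < sin (|m| * x / 2) * (|m| * y / 2) := key
      _ = (|m|/2) * (y * sin (|m| * x / 2)) := by ring
    exact lt_of_mul_lt_mul_left h4 (by positivity)
  have h5 : (x * sin (|m| * y / 2))^2 < (y * sin (|m| * x / 2))^2 := by
    apply pow_lt_pow_left₀ h3 (by positivity)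
    norm_num
  nlinarith [h5]

/-- Weak monotonicity (also covers m = 0). -/
private lemma term_le {m x y : ℝ} (hx : 0 < x) (hxy : x < y) (hmy : |m| * y ≤ π) :
    x^2 * (1 - cos (m*y)) ≤ y^2 * (1 - cos (m*x)) := by
  rcases eq_or_ne m 0 with h | h
  · simp [h]
  · exact (term_strict h hx hxy hmy).le

/-- Upper per-term bound: 1 - cos(m x) < m² x² / 2 for m ≠ 0, using |m| x ≤ π. -/
private lemma term_upper_strict {m x : ℝ} (hm : m ≠ 0) (hx : 0 < x) (hmx : |m| * x ≤ π) :
    1 - cos (m*x) < m^2 * x^2 / 2 := by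
  have hm0 : 0 < |m| := abs_pos.2 hm
  have hcx : cos (m*x) = cos (|m| * x) := by
    rw [← Real.cos_abs (m*x), abs_mul, abs_of_pos hx]
  rw [hcx, one_sub_cos_eq]
  have h1 : 0 < |m| * x / 2 := by positivity
  have h2 : sin (|m| * x / 2) < |m| * x / 2 := Real.sin_lt h1
  have h3 : 0 ≤ sin (|m| * x / 2) :=
    sin_nonneg_of_nonneg_of_le_pi h1.le (by linarith [pi_pos.le])
  have h4 : sin (|m| * x / 2)^2 < (|m| * x / 2)^2 := by
    apply pow_lt_pow_left₀ h2 h3; norm_num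
  have : (|m| * x / 2)^2 = m^2 * x^2 / 4 := by
    rw [div_pow, mul_pow, sq_abs]; ring
  nlinarith [h4]

private lemma term_upper {m x : ℝ} (hx : 0 < x) (hmx : |m| * x ≤ π) :
    1 - cos (m*x) ≤ m^2 * x^2 / 2 := by
  rcases eq_or_ne m 0 with h | h
  · simp [h]
  · exact (term_upper_strict h hx hmx).le

open Finset in
/-- Key identity: p·sin u − sin(p·u) = (Σ_{k<p} (1 − cos((p−1−2k)u)))·sin u. -/
private lemma key_id (p : ℕ) (u : ℝ) :
    (p:ℝ) * sin u - sin ((p:ℝ) * u) =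
      (∑ k ∈ range p, (1 - cos (((p:ℝ) - 1 - 2*(k:ℝ)) * u))) * sin u := by
  have tel : ∑ k ∈ range p,
      (sin (((p:ℝ) - 2*(k:ℝ)) * u) - sin (((p:ℝ) - 2*((k:ℝ)+1)) * u))
      = 2 * sin ((p:ℝ) * u) := by
    have := Finset.sum_range_sub' (fun k => sin (((p:ℝ) - 2*(k:ℝ)) * u)) p
    simp only [Nat.cast_add, Nat.cast_one] at this
    rw [this]
    rw [show ((p:ℝ) - 2*(0:ℕ)) * u = (p:ℝ)*u by push_cast; ring,
      show ((p:ℝ) - 2*(p:ℝ)) * u = -((p:ℝ)*u) by ring, Real.sin_neg]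
    ring
  have step : ∀ k ∈ range p,
      sin (((p:ℝ) - 2*(k:ℝ)) * u) - sin (((p:ℝ) - 2*((k:ℝ)+1)) * u)
      = 2 * sin u * cos (((p:ℝ) - 1 - 2*(k:ℝ)) * u) := by
    intro k _
    rw [Real.sin_sub_sin]
    rw [show (((p:ℝ) - 2*(k:ℝ)) * u - ((p:ℝ) - 2*((k:ℝ)+1)) * u)/2 = u by ring,
      show (((p:ℝ) - 2*(k:ℝ)) * u + ((p:ℝ) - 2*((k:ℝ)+1)) * u)/2
        = ((p:ℝ) - 1 - 2*(k:ℝ)) * u by ring]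
  rw [Finset.sum_congr rfl step] at tel
  have expand : ∑ k ∈ range p, 2 * sin u * cos (((p:ℝ) - 1 - 2*(k:ℝ)) * u)
      = 2 * sin u * ∑ k ∈ range p, cos (((p:ℝ) - 1 - 2*(k:ℝ)) * u) := by
    rw [Finset.mul_sum]
  rw [expand] at tel
  have sumsub : (∑ k ∈ range p, (1 - cos (((p:ℝ) - 1 - 2*(k:ℝ)) * u)))
      = (p:ℝ) - ∑ k ∈ range p, cos (((p:ℝ) - 1 - 2*(k:ℝ)) * u) := by
    rw [Finset.sum_sub_distrib, Finset.sum_const, card_range]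
    simp
  rw [sumsub]
  nlinarith [tel]

set_option maxHeartbeats 1000000 in
theorem stmt_5 (p : ℕ) (hp : 2 ≤ p) (x : ℝ) (hx0 : 0 < x) (hx1 : x < π / 2) :
    4 / π ^ 2 * ((p : ℝ) - 1 / sin (π / (2 * p))) < ((p : ℝ) - sin x / sin (x / p)) / x ^ 2 ∧
      ((p : ℝ) - sin x / sin (x / p)) / x ^ 2 < ((p : ℝ) ^ 2 - 1) / (6 * p) := by
  have hpR : (2:ℝ) ≤ (p:ℝ) := by exact_mod_cast hp
  have hpp : (0:ℝ) < (p:ℝ) := by linarith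
  have hpi : 0 < π := pi_pos
  set u := x / (p:ℝ) with hu
  set v := π / (2 * (p:ℝ)) with hv
  have hu0 : 0 < u := by positivity
  have hv0 : 0 < v := by positivity
  have huv : u < v := by
    rw [hu, hv]
    rw [div_lt_div_iff₀ hpp (by positivity)]
    nlinarith
  have hvle : v ≤ π / 4 := by
    rw [hv, div_le_div_iff₀ (by positivity) (by norm_num)]
    nlinarith
  have hsu : 0 < sin u := sin_pos_of_pos_of_lt_pi hu0 (by nlinarith)
  have hsv : 0 < sin v := sin_pos_of_pos_of_lt_pi hv0 (by nlinarith)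
  -- bound on |m k|
  have hmb : ∀ k ∈ Finset.range p, |(p:ℝ) - 1 - 2*(k:ℝ)| ≤ (p:ℝ) - 1 := by
    intro k hk
    have hk' : (k:ℝ) + 1 ≤ (p:ℝ) := by exact_mod_cast Finset.mem_range.1 hk
    have hk0 : (0:ℝ) ≤ (k:ℝ) := Nat.cast_nonneg k
    rw [abs_le]
    constructor <;> linarith
  have hmv : ∀ k ∈ Finset.range p, |(p:ℝ) - 1 - 2*(k:ℝ)| * v ≤ π := by
    intro k hk
    have h1 := hmb k hk
    have habs : (0:ℝ) ≤ |(p:ℝ) - 1 - 2*(k:ℝ)| := abs_nonneg _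
    have h2 : |(p:ℝ) - 1 - 2*(k:ℝ)| * v ≤ ((p:ℝ) - 1) * v :=
      mul_le_mul_of_nonneg_right h1 hv0.le
    have h3 : ((p:ℝ) - 1) * v ≤ (p:ℝ) * v := by nlinarith
    have h4 : (p:ℝ) * v = π / 2 := by rw [hv]; field_simp
    linarith
  have hmu : ∀ k ∈ Finset.range p, |(p:ℝ) - 1 - 2*(k:ℝ)| * u ≤ π := by
    intro k hk
    have := hmv k hk
    have habs : (0:ℝ) ≤ |(p:ℝ) - 1 - 2*(k:ℝ)| := abs_nonneg _
    nlinarith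
  -- identities
  have hpu : (p:ℝ) * u = x := by rw [hu]; field_simp
  have hpv : (p:ℝ) * v = π / 2 := by rw [hv]; field_simp
  have hGsum : (p:ℝ) - sin x / sin (x / (p:ℝ)) =
      ∑ k ∈ Finset.range p, (1 - cos (((p:ℝ) - 1 - 2*(k:ℝ)) * u)) := by
    have hkey := key_id p u
    rw [hpu] at hkey
    rw [show x / (p:ℝ) = u from rfl]
    calc (p:ℝ) - sin x / sin u = ((p:ℝ) * sin u - sin x) / sin u := by
          field_simp
      _ = ((∑ k ∈ Finset.range p, (1 - cos (((p:ℝ) - 1 - 2*(k:ℝ)) * u))) * sin u) / sin u := by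
          rw [hkey]
      _ = ∑ k ∈ Finset.range p, (1 - cos (((p:ℝ) - 1 - 2*(k:ℝ)) * u)) := by
          rw [mul_div_cancel_right₀ _ hsu.ne']
  have hG2sum : (p:ℝ) - 1 / sin (π / (2 * (p:ℝ))) =
      ∑ k ∈ Finset.range p, (1 - cos (((p:ℝ) - 1 - 2*(k:ℝ)) * v)) := by
    have hkey := key_id p v
    rw [hpv, Real.sin_pi_div_two] at hkey
    rw [show π / (2 * (p:ℝ)) = v from rfl]
    calc (p:ℝ) - 1 / sin v = ((p:ℝ) * sin v - 1) / sin v := by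
          field_simp
      _ = ((∑ k ∈ Finset.range p, (1 - cos (((p:ℝ) - 1 - 2*(k:ℝ)) * v))) * sin v) / sin v := by
          rw [hkey]
      _ = ∑ k ∈ Finset.range p, (1 - cos (((p:ℝ) - 1 - 2*(k:ℝ)) * v)) := by
          rw [mul_div_cancel_right₀ _ hsv.ne']
  have hm0ne : (p:ℝ) - 1 - 2*((0:ℕ):ℝ) ≠ 0 := by push_cast; intro h; linarith
  have h0mem : 0 ∈ Finset.range p := Finset.mem_range.2 (by omega)
  have hx2 : (0:ℝ) < x^2 := by positivity
  constructor
  · -- lower bound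
    have main : ∑ k ∈ Finset.range p, u^2 * (1 - cos (((p:ℝ) - 1 - 2*(k:ℝ)) * v)) <
        ∑ k ∈ Finset.range p, v^2 * (1 - cos (((p:ℝ) - 1 - 2*(k:ℝ)) * u)) := by
      apply Finset.sum_lt_sum
      · intro k hk
        exact term_le hu0 huv (hmv k hk)
      · exact ⟨0, h0mem, term_strict hm0ne hu0 huv (hmv 0 h0mem)⟩
    rw [← Finset.mul_sum, ← Finset.mul_sum] at main
    rw [hGsum, hG2sum]
    rw [lt_div_iff₀ hx2]
    have hxeq : x = (p:ℝ) * u := hpu.symm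
    have hπeq : π = 2 * (p:ℝ) * v := by rw [hv]; field_simp
    set A := ∑ k ∈ Finset.range p, (1 - cos (((p:ℝ) - 1 - 2*(k:ℝ)) * v)) with hA
    set B := ∑ k ∈ Finset.range p, (1 - cos (((p:ℝ) - 1 - 2*(k:ℝ)) * u)) with hB
    -- goal : 4 / π^2 * A * x^2 < B
    have hπ2 : π^2 = 4 * (p:ℝ)^2 * v^2 := by rw [hπeq]; ring
    have hx2e : x^2 = (p:ℝ)^2 * u^2 := by rw [hxeq]; ring
    rw [hπ2, hx2e]
    rw [div_mul_eq_mul_div, div_mul_eq_mul_div, div_lt_iff₀ (by positivity)]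
    nlinarith [main, sq_nonneg ((p:ℝ)*v)]
  · -- upper bound
    have main : ∑ k ∈ Finset.range p, (1 - cos (((p:ℝ) - 1 - 2*(k:ℝ)) * u)) <
        ∑ k ∈ Finset.range p, ((p:ℝ) - 1 - 2*(k:ℝ))^2 * u^2 / 2 := by
      apply Finset.sum_lt_sum
      · intro k hk
        exact term_upper hu0 (hmu k hk)
      · exact ⟨0, h0mem, term_upper_strict hm0ne hu0 (hmu 0 h0mem)⟩
    have hsum2 : ∑ k ∈ Finset.range p, ((p:ℝ) - 1 - 2*(k:ℝ))^2 * u^2 / 2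
        = ((p:ℝ)*((p:ℝ)^2-1)/3) * (u^2/2) := by
      calc ∑ k ∈ Finset.range p, ((p:ℝ) - 1 - 2*(k:ℝ))^2 * u^2 / 2
          = (∑ k ∈ Finset.range p, ((p:ℝ) - 1 - 2*(k:ℝ))^2) * (u^2/2) := by
            rw [Finset.sum_mul]
            exact Finset.sum_congr rfl fun k _ => by ring
        _ = ((p:ℝ)*((p:ℝ)^2-1)/3) * (u^2/2) := by rw [sum_m_sq]
    rw [hGsum, div_lt_iff₀ hx2]
    have hx2e : x^2 = (p:ℝ)^2 * u^2 := by rw [← hpu]; ring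
    have hrhs : ((p:ℝ)^2 - 1) / (6*(p:ℝ)) * x^2 = ((p:ℝ)*((p:ℝ)^2-1)/3) * (u^2/2) := by
      rw [hx2e]; field_simp; ring
    linarith [main, hsum2.symm ▸ main]
end

section
/- The function x ↦ (1 - cos(x)/cos(x/2))/x² is strictly increasing on (0, π/2). -/
open Real

/-!
Write `c = cos (x / 2)`, so that `1 - cos x / c = (c - cos x) / c` and the sign of the derivative
is that of `x sin (x/2) (2 + cos x) - 4 c (c - cos x)`. With `t = x / 2` this is positive by the
Cusa–Huygens inequality `3 sin t < t (2 + cos t)`, up to the nonnegative remainder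
`(1 - c)² (3 + 2c - 2c²)`.
-/

namespace Real

lemma cos_eq_two_mul_cos_half_sq_sub_one (x : ℝ) : cos x = 2 * cos (x / 2) ^ 2 - 1 := by
  rw [← cos_two_mul, mul_div_cancel₀ x two_ne_zero]

lemma sin_eq_two_mul_sin_half_mul_cos_half (x : ℝ) : sin x = 2 * sin (x / 2) * cos (x / 2) := by
  rw [← sin_two_mul, mul_div_cancel₀ x two_ne_zero]

lemma sin_half_pos {x : ℝ} (h0 : 0 < x) (hπ : x < π) : 0 < sin (x / 2) :=
  sin_pos_of_pos_of_lt_pi (by linarith) (by linarith)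

lemma cos_half_pos {x : ℝ} (h0 : 0 < x) (hπ : x < π) : 0 < cos (x / 2) :=
  cos_pos_of_mem_Ioo ⟨by linarith, by linarith⟩

-- The Cusa–Huygens inequality.
theorem three_mul_sin_lt_mul_two_add_cos {t : ℝ} (ht : 0 < t) : 3 * sin t < t * (2 + cos t) := by
  rcases le_or_gt t π with htπ | htπ
  · have hmono : StrictMonoOn (fun u : ℝ => u * (2 + cos u) - 3 * sin u) (Set.Icc 0 π) := by
      refine strictMonoOn_of_deriv_pos (convex_Icc 0 π) (by fun_prop) fun u hu => ?_
      rw [interior_Icc] at hu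
      have hderiv : HasDerivAt (fun u : ℝ => u * (2 + cos u) - 3 * sin u)
          (1 * (2 + cos u) + u * (0 + -sin u) - 3 * cos u) u :=
        ((hasDerivAt_id u).mul ((hasDerivAt_const u 2).add (hasDerivAt_cos u))).sub
          ((hasDerivAt_sin u).const_mul 3)
      rw [hderiv.deriv]
      -- the derivative is `2 sin (u/2) cos (u/2) (2 tan (u/2) - u)`
      have hs := sin_half_pos hu.1 hu.2
      have hc := cos_half_pos hu.1 hu.2
      have htan : u / 2 * cos (u / 2) < sin (u / 2) := by
        rw [← lt_div_iff₀ hc, ← tan_eq_sin_div_cos]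
        exact lt_tan (by linarith [hu.1]) (by linarith [hu.2])
      rw [cos_eq_two_mul_cos_half_sq_sub_one u, sin_eq_two_mul_sin_half_mul_cos_half u]
      nlinarith [mul_pos hs (sub_pos.mpr htan), sin_sq_add_cos_sq (u / 2)]
    simpa using hmono ⟨le_rfl, pi_pos.le⟩ ⟨ht.le, htπ⟩ ht
  · nlinarith [sin_le_one t, neg_one_le_cos t, pi_gt_three]

lemma four_mul_cos_half_mul_sub_cos_lt {x : ℝ} (h0 : 0 < x) (hπ : x < π) :
    4 * cos (x / 2) * (cos (x / 2) - cos x) < x * sin (x / 2) * (2 + cos x) := by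
  have hs := sin_half_pos h0 hπ
  have hc := cos_half_pos h0 hπ
  have hcusa := three_mul_sin_lt_mul_two_add_cos (half_pos h0)
  rw [cos_eq_two_mul_cos_half_sq_sub_one x]
  set s := sin (x / 2)
  set c := cos (x / 2)
  have hs2 : s ^ 2 * (2 * c ^ 2 + 1) = (1 - c ^ 2) * (2 * c ^ 2 + 1) := by
    rw [← sin_sq_add_cos_sq (x / 2)]; ring
  -- multiply the Cusa–Huygens inequality by `2 s (2c² + 1) / (2 + c)`; the defect is
  -- `2 (1 - c)² (3 + 2c - 2c²) / (2 + c) ≥ 0`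
  have hscaled := mul_lt_mul_of_pos_left hcusa (by positivity : 0 < 2 * s * (2 * c ^ 2 + 1))
  have hdefect : 0 ≤ (1 - c) ^ 2 * (3 + 2 * c - 2 * c ^ 2) := by
    apply mul_nonneg (sq_nonneg _); nlinarith
  have hprod : 0 < (2 + c) * (x * s * (2 + (2 * c ^ 2 - 1)) - 4 * c * (c - (2 * c ^ 2 - 1))) := by
    nlinarith
  exact sub_pos.mp (pos_of_mul_pos_right hprod (by linarith))

lemma hasDerivAt_one_sub_cos_div_cos_half_div_sq {x : ℝ} (hc : cos (x / 2) ≠ 0) (hx : x ≠ 0) :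
    HasDerivAt (fun y => (1 - cos y / cos (y / 2)) / y ^ 2)
      ((x * sin (x / 2) * (2 + cos x) - 4 * cos (x / 2) * (cos (x / 2) - cos x)) /
        (2 * cos (x / 2) ^ 2 * x ^ 3)) x := by
  have hhalf : HasDerivAt (fun y => cos (y / 2)) (-sin (x / 2) * (1 / 2)) x :=
    ((hasDerivAt_id' x).div_const 2).cos
  refine (((hasDerivAt_const x 1).sub ((hasDerivAt_cos x).div hhalf hc)).div
    (hasDerivAt_pow 2 x) (pow_ne_zero 2 hx)).congr_deriv ?_
  simp only [Pi.sub_apply, Pi.div_apply]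
  rw [sin_eq_two_mul_sin_half_mul_cos_half x, cos_eq_two_mul_cos_half_sq_sub_one x]
  field_simp
  ring

theorem strictMonoOn_one_sub_cos_div_cos_half_div_sq :
    StrictMonoOn (fun x : ℝ => (1 - cos x / cos (x / 2)) / x ^ 2) (Set.Ioo 0 π) := by
  have hderiv : ∀ x ∈ Set.Ioo 0 π, HasDerivAt (fun y => (1 - cos y / cos (y / 2)) / y ^ 2)
      ((x * sin (x / 2) * (2 + cos x) - 4 * cos (x / 2) * (cos (x / 2) - cos x)) /
        (2 * cos (x / 2) ^ 2 * x ^ 3)) x := fun x hx =>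
    hasDerivAt_one_sub_cos_div_cos_half_div_sq (cos_half_pos hx.1 hx.2).ne' hx.1.ne'
  refine strictMonoOn_of_deriv_pos (convex_Ioo 0 π)
    (fun x hx => (hderiv x hx).continuousAt.continuousWithinAt) fun x hx => ?_
  rw [interior_Ioo] at hx
  rw [(hderiv x hx).deriv]
  have hc := cos_half_pos hx.1 hx.2
  have hx0 := hx.1
  exact div_pos (sub_pos.mpr (four_mul_cos_half_mul_sub_cos_lt hx.1 hx.2)) (by positivity)

end Real

theorem stmt_6 :
    StrictMonoOn (fun x : ℝ => (1 - cos x / cos (x / 2)) / x ^ 2) (Set.Ioo 0 (π / 2)) :=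
  strictMonoOn_one_sub_cos_div_cos_half_div_sq.mono (Set.Ioo_subset_Ioo_right (by linarith [pi_pos]))
end

section
/- The function x ↦ (2 - sin(x)/sin(x/2))/x² is strictly decreasing on (0, π/2). -/
open Real

lemma sin_div_lt_sin_div {a b : ℝ} (ha : 0 < a) (hab : a < b) (hb : b ≤ π) :
    sin b / b < sin a / a := by
  have hb0 : 0 < b := ha.trans hab
  have hw1 : 0 < 1 - a / b := by
    rw [sub_pos, div_lt_one hb0]; exact hab
  have hw2 : 0 < a / b := div_pos ha hb0
  have := strictConcaveOn_sin_Icc.2 (x := 0) (y := b)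
    ⟨le_rfl, pi_pos.le⟩ ⟨hb0.le, hb⟩ hb0.ne hw1 hw2 (by ring)
  simp only [smul_eq_mul, sin_zero, mul_zero, zero_add, mul_zero] at this
  rw [show a / b * b = a by field_simp] at this
  rw [div_lt_div_iff₀ hb0 ha]
  calc sin b * a = a / b * sin b * b := by field_simp
    _ < sin a * b := by
        have := mul_lt_mul_of_pos_right this hb0
        linarith

lemma rewrite_f {z : ℝ} (hz : 0 < z) (hz2 : z < π / 2) :
    (2 - sin z / sin (z / 2)) / z ^ 2 = (sin (z / 4) / (z / 4)) ^ 2 / 4 := by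
  have hs2 : 0 < sin (z / 2) := sin_pos_of_pos_of_lt_pi (by linarith) (by nlinarith [pi_pos])
  have h1 : sin z = 2 * sin (z / 2) * cos (z / 2) := by
    rw [show z = 2 * (z / 2) by ring, sin_two_mul]; ring_nf
  have h2 : sin z / sin (z / 2) = 2 * cos (z / 2) := by
    rw [h1]; field_simp
  have h3 : cos (z / 2) = 1 - 2 * sin (z / 4) ^ 2 := by
    rw [show z / 2 = 2 * (z / 4) by ring, cos_two_mul]
    nlinarith [sin_sq_add_cos_sq (z / 4)]
  rw [h2, h3]
  field_simp
  ring

theorem stmt_7 :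
    StrictAntiOn (fun x : ℝ => (2 - sin x / sin (x / 2)) / x ^ 2) (Set.Ioo 0 (π / 2)) := by
  intro x hx y hy hxy
  obtain ⟨hx0, hx2⟩ := hx
  obtain ⟨hy0, hy2⟩ := hy
  simp only [rewrite_f hx0 hx2, rewrite_f hy0 hy2]
  have key : sin (y / 4) / (y / 4) < sin (x / 4) / (x / 4) :=
    sin_div_lt_sin_div (by linarith) (by linarith) (by nlinarith [pi_pos])
  have hyp : 0 < sin (y / 4) / (y / 4) := by
    have : 0 < sin (y / 4) := sin_pos_of_pos_of_lt_pi (by linarith) (by nlinarith [pi_pos])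
    positivity
  gcongr
end

section
/- For every integer p ≥ 3, the function x ↦ (1 - cos(x)/cos(x/p))/x² is strictly decreasing on (0, π/2). -/
/-!
With `c = 1 / p`, the identity `cos (c x) - cos x = 2 sin ((1 - c) x / 2) sin ((1 + c) x / 2)`
factors the function as `2 · (sin ((1 - c) x / 2) / x) · (sin ((1 + c) x / 2) / (x cos (c x)))`.
Both factors are positive on `(0, π / 2)`. The first is a rescaled `sin t / t`, hence strictly
decreasing. The second is decreasing: the sign of its derivative reduces to the Taylor-type bound
`sin u - u cos u ≥ u² sin u / 3` together with `cos (c x) ≥ 6 / 7`, which holds as `c ≤ 1 / 3`.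
-/

open Real Set

lemma StrictAntiOn.mul_antitoneOn {α M₀ : Type*} [Preorder α] [MulZeroClass M₀] [Preorder M₀]
    [PosMulMono M₀] [MulPosStrictMono M₀] {f g : α → M₀} {s : Set α}
    (hf : StrictAntiOn f s) (hg : AntitoneOn g s) (hf₀ : ∀ x ∈ s, 0 ≤ f x)
    (hg₀ : ∀ x ∈ s, 0 < g x) : StrictAntiOn (fun x => f x * g x) s :=
  fun x hx y hy hxy =>
    calc f y * g y ≤ f y * g x := mul_le_mul_of_nonneg_left (hg hx hy hxy.le) (hf₀ y hy)
      _ < f x * g x := mul_lt_mul_of_pos_right (hf hx hy hxy) (hg₀ x hx)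

namespace Real

lemma mul_cos_lt_sin {x : ℝ} (h₀ : 0 < x) (hπ : x < π) : x * cos x < sin x := by
  rcases lt_or_ge x (π / 2) with hx | hx
  · have hcos : 0 < cos x := cos_pos_of_mem_Ioo ⟨by linarith, hx⟩
    have htan := lt_tan h₀ hx
    rwa [tan_eq_sin_div_cos, lt_div_iff₀ hcos] at htan
  · have hcos : cos x ≤ 0 := cos_nonpos_of_pi_div_two_le_of_le hx (by linarith)
    nlinarith [sin_pos_of_pos_of_lt_pi h₀ hπ]

lemma strictAntiOn_sin_div_self : StrictAntiOn (fun x => sin x / x) (Ioc 0 π) := by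
  refine strictAntiOn_of_hasDerivWithinAt_neg (convex_Ioc 0 π)
    (f' := fun x => (cos x * x - sin x * 1) / x ^ 2)
    (continuousOn_sin.div continuousOn_id fun x hx => hx.1.ne') (fun x hx => ?_) (fun x hx => ?_)
  all_goals rw [interior_Ioc] at hx
  · exact ((hasDerivAt_sin x).div (hasDerivAt_id x) hx.1.ne').hasDerivWithinAt
  · have := mul_cos_lt_sin hx.1 hx.2
    exact div_neg_of_neg_of_pos (by linarith) (by nlinarith [hx.1])

lemma strictAntiOn_sin_mul_div_self {b : ℝ} (hb : 0 < b) :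
    StrictAntiOn (fun x => sin (b * x) / x) (Ioc 0 (π / b)) := by
  intro x hx y hy hxy
  have hmem : ∀ z ∈ Ioc 0 (π / b), b * z ∈ Ioc 0 π := fun z hz =>
    ⟨mul_pos hb hz.1, by linarith [(le_div_iff₀ hb).mp hz.2]⟩
  have key := strictAntiOn_sin_div_self (hmem x hx) (hmem y hy) (by gcongr)
  calc sin (b * y) / y = b * (sin (b * y) / (b * y)) := by field_simp [hy.1.ne']
    _ < b * (sin (b * x) / (b * x)) := mul_lt_mul_of_pos_left key hb
    _ = sin (b * x) / x := by field_simp [hx.1.ne']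

lemma sq_mul_sin_div_three_le_sin_sub_mul_cos {x : ℝ} (h₀ : 0 ≤ x) (hπ : x ≤ π) :
    x ^ 2 * sin x / 3 ≤ sin x - x * cos x := by
  have hmono : MonotoneOn (fun t => sin t - t * cos t - t ^ 2 * sin t / 3) (Icc 0 π) := by
    refine monotoneOn_of_hasDerivWithinAt_nonneg (convex_Icc 0 π)
      (f' := fun t => t * (sin t - t * cos t) / 3) (by fun_prop) (fun t _ => ?_) (fun t ht => ?_)
    · have := ((hasDerivAt_sin t).sub ((hasDerivAt_id t).mul (hasDerivAt_cos t))).sub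
        (((hasDerivAt_pow 2 t).mul (hasDerivAt_sin t)).div_const 3)
      refine (this.congr_deriv ?_).hasDerivWithinAt
      simp only [id, Nat.cast_ofNat]
      ring
    · rw [interior_Icc] at ht
      have := mul_cos_lt_sin ht.1 ht.2
      exact div_nonneg (mul_nonneg ht.1.le (by linarith)) zero_le_three
  have := hmono ⟨le_rfl, pi_pos.le⟩ ⟨h₀, hπ⟩ h₀
  norm_num at this
  linarith

lemma mul_cos_mul_cos_le_sin_mul {u v : ℝ} (hu₀ : 0 ≤ u) (huπ : u ≤ π) (hv₀ : 0 ≤ v)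
    (hvπ : v ≤ π / 2) (h : 3 * v ^ 2 ≤ u ^ 2 * cos v) :
    u * cos u * cos v ≤ sin u * (cos v - v * sin v) := by
  have hsin_u : 0 ≤ sin u := sin_nonneg_of_nonneg_of_le_pi hu₀ huπ
  have hcos_v : 0 ≤ cos v := cos_nonneg_of_mem_Icc ⟨by linarith [pi_pos], hvπ⟩
  have hsin_v : v * sin v ≤ v ^ 2 := by nlinarith [sin_le hv₀]
  have := mul_le_mul_of_nonneg_left (sq_mul_sin_div_three_le_sin_sub_mul_cos hu₀ huπ) hcos_v
  nlinarith [mul_le_mul_of_nonneg_left hsin_v hsin_u, mul_le_mul_of_nonneg_right h hsin_u]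

lemma cos_mul_pos_of_mem_Ioo {c x : ℝ} (hc₀ : 0 ≤ c) (hc : c ≤ 1) (hx : x ∈ Ioo 0 (π / 2)) :
    0 < cos (c * x) :=
  cos_pos_of_mem_Ioo ⟨by nlinarith [pi_pos, hx.1], by nlinarith [pi_pos, hx.1, hx.2]⟩

lemma hasDerivAt_sin_mul_div_mul_cos_mul (a c : ℝ) {x : ℝ} (hx : x * cos (c * x) ≠ 0) :
    HasDerivAt (fun x => sin (a * x) / (x * cos (c * x)))
      ((a * x * cos (a * x) * cos (c * x) - sin (a * x) * (cos (c * x) - c * x * sin (c * x)))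
        / (x * cos (c * x)) ^ 2) x := by
  have hsin := ((hasDerivAt_id' x).const_mul a).sin
  have hcos := ((hasDerivAt_id' x).const_mul c).cos
  refine (hsin.div ((hasDerivAt_id' x).mul hcos) hx).congr_deriv ?_
  simp only [Pi.mul_apply]
  ring

/-- `hac` is what makes `3 (c x) ^ 2 ≤ (a x) ^ 2 cos (c x)` hold, using `cos (c x) ≥ 6 / 7` for
`c x ≤ π / 6`. -/
lemma antitoneOn_sin_mul_div_mul_cos_mul {a c : ℝ} (ha₀ : 0 ≤ a) (ha : a ≤ 2) (hc₀ : 0 ≤ c)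
    (hc : c ≤ 1 / 3) (hac : 7 * c ^ 2 ≤ 2 * a ^ 2) :
    AntitoneOn (fun x => sin (a * x) / (x * cos (c * x))) (Ioo 0 (π / 2)) := by
  have hden : ∀ x ∈ Ioo 0 (π / 2), x * cos (c * x) ≠ 0 := fun x hx =>
    (mul_pos hx.1 (cos_mul_pos_of_mem_Ioo hc₀ (by linarith) hx)).ne'
  refine antitoneOn_of_hasDerivWithinAt_nonpos (convex_Ioo 0 (π / 2))
    (fun x hx => (hasDerivAt_sin_mul_div_mul_cos_mul a c (hden x hx)).continuousAt
      |>.continuousWithinAt)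
    (fun x hx => (hasDerivAt_sin_mul_div_mul_cos_mul a c
      (hden x (interior_subset hx))).hasDerivWithinAt) (fun x hx => ?_)
  rw [interior_Ioo] at hx
  refine div_nonpos_of_nonpos_of_nonneg ?_ (sq_nonneg _)
  have hcx : c * x ≤ π / 6 := by nlinarith [pi_pos, hx.1, hx.2]
  have hcos_67 : 6 / 7 ≤ cos (c * x) := by
    nlinarith [one_sub_sq_div_two_le_cos (x := c * x), pi_lt_d2, mul_nonneg hc₀ hx.1.le]
  have := mul_cos_mul_cos_le_sin_mul (u := a * x) (v := c * x)
    (mul_nonneg ha₀ hx.1.le) (by nlinarith [pi_pos, hx.1, hx.2]) (mul_nonneg hc₀ hx.1.le)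
    (by linarith [pi_pos])
    (by nlinarith [sq_nonneg x, mul_le_mul_of_nonneg_left hcos_67 (sq_nonneg (a * x))])
  linarith

lemma one_sub_cos_div_cos_mul (c x : ℝ) (h : cos (c * x) ≠ 0) :
    1 - cos x / cos (c * x) = 2 * sin ((1 - c) / 2 * x) * sin ((1 + c) / 2 * x) / cos (c * x) := by
  have := cos_sub_cos (c * x) x
  rw [show (c * x + x) / 2 = (1 + c) / 2 * x by ring,
    show (c * x - x) / 2 = -((1 - c) / 2 * x) by ring, sin_neg] at this
  rw [eq_div_iff h, sub_mul, div_mul_cancel₀ _ h, one_mul]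
  linear_combination this

theorem strictAntiOn_one_sub_cos_div_cos_mul_div_sq {c : ℝ} (hc₀ : 0 ≤ c) (hc : c ≤ 1 / 3) :
    StrictAntiOn (fun x => (1 - cos x / cos (c * x)) / x ^ 2) (Ioo 0 (π / 2)) := by
  set a := (1 + c) / 2 with ha
  set b := (1 - c) / 2 with hb
  have ha₀ : 0 < a := by linarith
  have ha₁ : a < 1 := by linarith
  have hb₀ : 0 < b := by linarith
  have hb₁ : b < 1 := by linarith
  have hcos : ∀ x ∈ Ioo 0 (π / 2), 0 < cos (c * x) := fun x hx =>
    cos_mul_pos_of_mem_Ioo hc₀ (by linarith) hx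
  have hF : StrictAntiOn (fun x => sin (b * x) / x) (Ioo 0 (π / 2)) :=
    (strictAntiOn_sin_mul_div_self hb₀).mono fun x hx =>
      ⟨hx.1, by rw [le_div_iff₀ hb₀]; nlinarith [hx.1, hx.2, pi_pos]⟩
  have hG := antitoneOn_sin_mul_div_mul_cos_mul ha₀.le (ha₁.le.trans one_le_two) hc₀ hc
    (by rw [ha]; nlinarith [mul_nonneg hc₀ (sub_nonneg.2 hc)])
  have hFG := hF.mul_antitoneOn hG
    (fun x hx => div_nonneg (sin_nonneg_of_nonneg_of_le_pi (by nlinarith [hx.1])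
      (by nlinarith [hx.1, hx.2, pi_pos])) hx.1.le)
    (fun x hx => div_pos (sin_pos_of_pos_of_lt_pi (by nlinarith [hx.1])
      (by nlinarith [hx.1, hx.2, pi_pos])) (mul_pos hx.1 (hcos x hx)))
  have hf : ∀ x ∈ Ioo 0 (π / 2), (1 - cos x / cos (c * x)) / x ^ 2
      = 2 * (sin (b * x) / x * (sin (a * x) / (x * cos (c * x)))) := fun x hx => by
    rw [one_sub_cos_div_cos_mul c x (hcos x hx).ne']
    ring
  intro x hx y hy hxy
  simp only [hf x hx, hf y hy]
  exact mul_lt_mul_of_pos_left (hFG hx hy hxy) two_pos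

end Real

theorem stmt_8 (p : ℕ) (hp : 3 ≤ p) :
    StrictAntiOn (fun x : ℝ => (1 - cos x / cos (x / p)) / x ^ 2) (Set.Ioo 0 (π / 2)) := by
  have hp' : (3 : ℝ) ≤ p := by exact_mod_cast hp
  simpa only [inv_mul_eq_div] using strictAntiOn_one_sub_cos_div_cos_mul_div_sq
    (inv_nonneg.mpr p.cast_nonneg) (inv_le_of_inv_le₀ (by norm_num) (by simpa using hp'))
end

section
/- For every integer p ≥ 2, the function x ↦ (p - sin(x)/sin(x/p))/x² is strictly decreasing on (0, π/2). -/
open Real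

lemma lemB (p : ℕ) (θ : ℝ) :
    2 * Real.sin θ * ∑ k ∈ Finset.range p, Real.cos (((p:ℝ) - 1 - 2*k) * θ)
      = 2 * Real.sin ((p:ℝ) * θ) := by
  have h := Finset.sum_range_sub' (fun k : ℕ => Real.sin (((p:ℝ) - 2*k) * θ)) p
  have h2 : ∀ k : ℕ, (fun k : ℕ => Real.sin (((p:ℝ) - 2*k) * θ)) k
      - (fun k : ℕ => Real.sin (((p:ℝ) - 2*k) * θ)) (k+1)
      = 2 * Real.sin θ * Real.cos (((p:ℝ) - 1 - 2*k) * θ) := by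
    intro k
    simp only
    rw [Real.sin_sub_sin]
    have e1 : (((p:ℝ) - 2*k) * θ - ((p:ℝ) - 2*(k+1:ℕ)) * θ)/2 = θ := by push_cast; ring
    have e2 : (((p:ℝ) - 2*k) * θ + ((p:ℝ) - 2*(k+1:ℕ)) * θ)/2 = ((p:ℝ) - 1 - 2*k) * θ := by
      push_cast; ring
    rw [e1, e2]
  rw [Finset.mul_sum]
  rw [Finset.sum_congr rfl (fun k _ => (h2 k).symm), h]
  have e3 : ((p:ℝ) - 2*(0:ℕ)) * θ = (p:ℝ) * θ := by push_cast; ring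
  have e4 : ((p:ℝ) - 2*(p:ℕ)) * θ = -((p:ℝ) * θ) := by push_cast; ring
  rw [e3, e4, Real.sin_neg]
  ring

lemma keyId (p : ℕ) (hp : 1 ≤ p) (x : ℝ) (hs : Real.sin (x/p) ≠ 0) :
    (p:ℝ) - Real.sin x / Real.sin (x/p)
      = ∑ k ∈ Finset.range p, 2 * Real.sin (((p:ℝ)-1-2*k) * (x / (2*p)))^2 := by
  have hp0 : (p:ℝ) ≠ 0 := by positivity
  have hB := lemB p (x/p)
  have hx : (p:ℝ) * (x/p) = x := by field_simp
  rw [hx] at hB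
  have hS : Real.sin x / Real.sin (x/p)
      = ∑ k ∈ Finset.range p, Real.cos (((p:ℝ) - 1 - 2*k) * (x/p)) := by
    have : Real.sin (x/p) * ∑ k ∈ Finset.range p, Real.cos (((p:ℝ) - 1 - 2*k) * (x/p))
        = Real.sin x := by linarith
    rw [← this, mul_comm, mul_div_assoc, div_self hs, mul_one]
  rw [hS]
  have hterm : ∀ k ∈ Finset.range p,
      Real.cos (((p:ℝ) - 1 - 2*k) * (x/p))
        = 1 - 2 * Real.sin (((p:ℝ)-1-2*k) * (x / (2*p)))^2 := by
    intro k _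
    have e : ((p:ℝ) - 1 - 2*k) * (x/p) = 2 * (((p:ℝ)-1-2*k) * (x / (2*p))) := by
      field_simp
    rw [e, Real.cos_two_mul]
    nlinarith [Real.sin_sq_add_cos_sq (((p:ℝ)-1-2*k) * (x / (2*p)))]
  rw [Finset.sum_congr rfl hterm, Finset.sum_sub_distrib]
  simp [Finset.card_range]

lemma lemC {c a b : ℝ} (hc : 0 < c) (ha : 0 < a) (hab : a < b) (hb : c * b ≤ π) :
    Real.sin (c*b)^2 / b^2 < Real.sin (c*a)^2 / a^2 := by
  have hb0 : 0 < b := ha.trans hab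
  have hcb : 0 < c * b := by positivity
  have hmem0 : (0:ℝ) ∈ Set.Icc 0 π := by constructor <;> [rfl; exact Real.pi_pos.le]
  have hmem1 : c * b ∈ Set.Icc 0 π := ⟨hcb.le, hb⟩
  have hw1 : 0 < 1 - a/b := by
    have : a/b < 1 := (div_lt_one hb0).2 hab
    linarith
  have hw2 : 0 < a/b := by positivity
  have hkey := strictConcaveOn_sin_Icc.2 hmem0 hmem1 hcb.ne hw1 hw2 (by ring)
  simp only [smul_eq_mul, mul_zero, Real.sin_zero, zero_add] at hkey
  have he : (a/b) * (c*b) = c * a := by field_simp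
  rw [he] at hkey
  -- hkey : (1 - a/b) * 0 + a/b * sin (c*b) < sin (c*a)
  have hsnn : 0 ≤ Real.sin (c*b) := Real.sin_nonneg_of_nonneg_of_le_pi hcb.le hb
  have h1 : 0 ≤ a * Real.sin (c*b) := by positivity
  have h2 : a * Real.sin (c*b) < Real.sin (c*a) * b := by
    have h3 := mul_lt_mul_of_pos_right hkey hb0
    calc a * Real.sin (c*b) = a/b * Real.sin (c*b) * b := by field_simp
      _ < Real.sin (c*a) * b := h3
  rw [div_lt_div_iff₀ (by positivity) (by positivity)]
  nlinarith [mul_self_lt_mul_self h1 h2]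

lemma term_lt (P : ℝ) (hP : 0 < P) {m a b : ℝ} (hm : |m| ≤ 2*P) (hm0 : m ≠ 0)
    (ha : 0 < a) (hab : a < b) (hb : b < π) :
    2 * Real.sin (m * (b/(2*P)))^2 / b^2 < 2 * Real.sin (m * (a/(2*P)))^2 / a^2 := by
  have habs : ∀ x : ℝ, Real.sin (m * (x/(2*P)))^2 = Real.sin ((|m|/(2*P)) * x)^2 := by
    intro x
    rcases abs_cases m with ⟨h, _⟩ | ⟨h, _⟩
    · rw [h]; ring_nf
    · rw [h, show m * (x/(2*P)) = -(-m/(2*P) * x) by field_simp, Real.sin_neg, neg_sq]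
  rw [habs a, habs b]
  have hc : 0 < |m|/(2*P) := by positivity
  have hcb : (|m|/(2*P)) * b ≤ π := by
    have h1 : (|m|/(2*P)) * b ≤ 1 * b := by
      apply mul_le_mul_of_nonneg_right _ (le_of_lt (ha.trans hab))
      rw [div_le_one (by positivity)]; linarith
    linarith
  have := lemC hc ha hab hcb
  have e1 : 2 * Real.sin ((|m|/(2*P)) * b)^2 / b^2 = 2 * (Real.sin ((|m|/(2*P)) * b)^2 / b^2) := by
    ring
  have e2 : 2 * Real.sin ((|m|/(2*P)) * a)^2 / a^2 = 2 * (Real.sin ((|m|/(2*P)) * a)^2 / a^2) := by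
    ring
  rw [e1, e2]
  linarith

theorem stmt_9 (p : ℕ) (hp : 2 ≤ p) :
    StrictAntiOn (fun x : ℝ => ((p : ℝ) - sin x / sin (x / p)) / x ^ 2) (Set.Ioo 0 (π / 2)) := by
  intro a ha b hb hab
  obtain ⟨ha0, ha2⟩ := ha
  obtain ⟨hb0, hb2⟩ := hb
  have hp1 : 1 ≤ p := le_trans (by norm_num) hp
  have hpR : (0:ℝ) < p := by exact_mod_cast Nat.pos_of_ne_zero (by omega)
  have hπ : 0 < π := Real.pi_pos
  have hsin : ∀ x : ℝ, 0 < x → x < π/2 → Real.sin (x/p) ≠ 0 := by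
    intro x hx hx2
    have h1 : 0 < x/p := by positivity
    have h2 : x/p < π := by
      have : x/p ≤ x/1 := by
        apply div_le_div_of_nonneg_left hx.le one_pos
        exact_mod_cast hp1
      simp at this; linarith
    exact (Real.sin_pos_of_pos_of_lt_pi h1 h2).ne'
  simp only
  rw [keyId p hp1 a (hsin a ha0 ha2), keyId p hp1 b (hsin b hb0 hb2),
    Finset.sum_div, Finset.sum_div]
  apply Finset.sum_lt_sum
  · intro k hk
    rcases eq_or_ne ((p:ℝ)-1-2*k) 0 with h0 | h0
    · rw [h0]; simp
    · have hkp : (k:ℝ) ≤ (p:ℝ) - 1 := by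
        have hk' : k < p := Finset.mem_range.mp hk
        have : (k:ℝ) + 1 ≤ (p:ℝ) := by exact_mod_cast hk'
        linarith
      have hm : |(p:ℝ)-1-2*k| ≤ 2*(p:ℝ) := by
        rw [abs_le]
        constructor <;> [nlinarith [Nat.cast_nonneg (α := ℝ) k]; nlinarith [Nat.cast_nonneg (α := ℝ) k]]
      have hbπ : b < π := by linarith
      exact (term_lt (p:ℝ) hpR hm h0 ha0 hab hbπ).le
  · refine ⟨0, Finset.mem_range.mpr (by omega), ?_⟩
    have h0 : ((p:ℝ)-1-2*(0:ℕ)) ≠ 0 := by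
      push_cast
      have : (2:ℝ) ≤ p := by exact_mod_cast hp
      intro h; nlinarith
    have hm : |(p:ℝ)-1-2*(0:ℕ)| ≤ 2*(p:ℝ) := by
      push_cast
      rw [abs_le]
      have : (2:ℝ) ≤ p := by exact_mod_cast hp
      constructor <;> linarith
    have hbπ : b < π := by linarith
    exact term_lt (p:ℝ) hpR hm h0 ha0 hab hbπ
end

section
/- For every integer p ≥ 3 and all x in (0, π/2), (4/π²)(1 - cosh(π/2)/cosh(π/(2p))) < (1 - cosh(x)/cosh(x/p))/x² < (1 - p²)/(2p²). -/
/-!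
Write `u(x) = cosh x / cosh (c x)` with `c = 1/p ≤ 1/3`. The upper bound is the second-order
Taylor estimate `u(x) > 1 + (1 - c²) x² / 2`, obtained from the power series of `cosh`.
For the lower bound, `(u(x) - 1) / x²` is strictly increasing on `(0, π/2]`: its derivative is
`φ(x) / x³` with `φ = x u' - 2 (u - 1)`, and `φ(0) = φ'(0) = 0`, `φ'' = x u'''`. Finally
`u''' > 0` on `(0, π/2)`: bounding `sinh (c x) ≤ c x cosh (c x)` reduces this to
`tanh x > 14 x / 27`, which holds on `(0, π/2)` by the Taylor bounds of `sinh` and `cosh`.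
-/

open Real Set Finset Nat

lemma pos_of_hasDerivAt_pos {f f' : ℝ → ℝ} {b x : ℝ} (hf0 : f 0 = 0)
    (hf : ∀ y, HasDerivAt f (f' y) y) (hf' : ∀ y ∈ Ioo 0 b, 0 < f' y) (hx : x ∈ Ioc 0 b) :
    0 < f x := by
  have hmono : StrictMonoOn f (Icc 0 b) := by
    refine strictMonoOn_of_deriv_pos (convex_Icc 0 b)
      (fun y _ ↦ (hf y).continuousAt.continuousWithinAt) fun y hy ↦ ?_
    rw [interior_Icc] at hy
    exact (hf y).deriv ▸ hf' y hy
  simpa [hf0] using hmono (left_mem_Icc.2 (hx.1.trans_le hx.2).le) ⟨hx.1.le, hx.2⟩ hx.1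

lemma strictMonoOn_div_sq_of_hasDerivAt {V V₁ V₂ V₃ : ℝ → ℝ} {b : ℝ}
    (hV : ∀ x, HasDerivAt V (V₁ x) x) (hV₁ : ∀ x, HasDerivAt V₁ (V₂ x) x)
    (hV₂ : ∀ x, HasDerivAt V₂ (V₃ x) x) (hV0 : V 0 = 0) (hV₁0 : V₁ 0 = 0)
    (hV₃ : ∀ x ∈ Ioo 0 b, 0 < V₃ x) :
    StrictMonoOn (fun x ↦ V x / x ^ 2) (Ioc 0 b) := by
  have hψ : ∀ x ∈ Ioc 0 b, 0 < x * V₂ x - V₁ x := by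
    refine fun x hx ↦ pos_of_hasDerivAt_pos (f := fun y ↦ y * V₂ y - V₁ y)
      (f' := fun y ↦ y * V₃ y) (by simp [hV₁0]) (fun y ↦ ?_) (fun y hy ↦ mul_pos hy.1 (hV₃ y hy)) hx
    exact (((hasDerivAt_id' y).mul (hV₂ y)).sub (hV₁ y)).congr_deriv (by ring)
  have hφ : ∀ x ∈ Ioc 0 b, 0 < x * V₁ x - 2 * V x := by
    refine fun x hx ↦ pos_of_hasDerivAt_pos (f := fun y ↦ y * V₁ y - 2 * V y)
      (f' := fun y ↦ y * V₂ y - V₁ y) (by simp [hV0]) (fun y ↦ ?_)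
      (fun y hy ↦ hψ y (Ioo_subset_Ioc_self hy)) hx
    exact (((hasDerivAt_id' y).mul (hV₁ y)).sub ((hV y).const_mul 2)).congr_deriv (by ring)
  refine strictMonoOn_of_deriv_pos (convex_Ioc 0 b) (fun x hx ↦ ?_) fun x hx ↦ ?_
  · exact ((hV x).continuousAt.div (continuousAt_id.pow 2)
      (pow_ne_zero 2 hx.1.ne')).continuousWithinAt
  rw [interior_Ioc] at hx
  have hx0 : x ≠ 0 := hx.1.ne'
  have hderiv : HasDerivAt (fun x ↦ V x / x ^ 2) ((x * V₁ x - 2 * V x) / x ^ 3) x := by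
    refine ((hV x).div (hasDerivAt_pow 2 x) (pow_ne_zero 2 hx0)).congr_deriv ?_
    field_simp
    ring
  rw [hderiv.deriv]
  exact div_pos (hφ x (Ioo_subset_Ioc_self hx)) (pow_pos hx.1 3)

namespace Real

lemma hasSum_cosh_sub_sum (x : ℝ) (n : ℕ) :
    HasSum (fun k ↦ x ^ (2 * (k + n)) / (2 * (k + n))!)
      (cosh x - ∑ k ∈ range n, x ^ (2 * k) / (2 * k)!) :=
  (hasSum_nat_add_iff' n).2 (hasSum_cosh x)

lemma sum_le_sinh {x : ℝ} (hx : 0 ≤ x) (n : ℕ) :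
    ∑ k ∈ range n, x ^ (2 * k + 1) / (2 * k + 1)! ≤ sinh x :=
  sum_le_hasSum _ (fun _ _ ↦ by positivity) (hasSum_sinh x)

lemma cosh_sub_sum_le_mul_cosh (x : ℝ) (n : ℕ) :
    cosh x - ∑ k ∈ range n, x ^ (2 * k) / (2 * k)! ≤ x ^ (2 * n) / (2 * n)! * cosh x := by
  refine hasSum_le (fun k ↦ ?_) (hasSum_cosh_sub_sum x n) ((hasSum_cosh x).mul_left _)
  have hfact : ((2 * n)! * (2 * k)! : ℝ) ≤ (2 * (k + n))! := by
    rw [mul_add, add_comm]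
    exact_mod_cast Nat.le_of_dvd (by positivity) (factorial_mul_factorial_dvd_factorial_add _ _)
  calc x ^ (2 * (k + n)) / (2 * (k + n))! ≤ x ^ (2 * (k + n)) / ((2 * n)! * (2 * k)!) := by
        gcongr
        exact (even_two_mul _).pow_nonneg x
    _ = x ^ (2 * n) / (2 * n)! * (x ^ (2 * k) / (2 * k)!) := by
        rw [mul_add, pow_add]
        field_simp

lemma sinh_le_mul_cosh {x : ℝ} (hx : 0 ≤ x) : sinh x ≤ x * cosh x := by
  refine hasSum_le (fun k ↦ ?_) (hasSum_sinh x) ((hasSum_cosh x).mul_left x)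
  rw [pow_succ, mul_comm _ x, mul_div_assoc]
  gcongr
  omega

lemma monotoneOn_cosh_sub_sum (n : ℕ) :
    MonotoneOn (fun x ↦ cosh x - ∑ k ∈ range n, x ^ (2 * k) / (2 * k)!) (Ici 0) :=
  fun y hy x _ hyx ↦ hasSum_le (fun k ↦ by gcongr) (hasSum_cosh_sub_sum y n)
    (hasSum_cosh_sub_sum x n)

noncomputable def coshRatio (c x : ℝ) : ℝ := cosh x / cosh (c * x)

noncomputable def coshRatioDeriv (c x : ℝ) : ℝ :=
  (sinh x * cosh (c * x) - c * cosh x * sinh (c * x)) / cosh (c * x) ^ 2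

noncomputable def coshRatioDeriv2 (c x : ℝ) : ℝ :=
  ((1 - c ^ 2) * cosh x * cosh (c * x) ^ 2 - 2 * c * sinh x * sinh (c * x) * cosh (c * x)
    + 2 * c ^ 2 * cosh x * sinh (c * x) ^ 2) / cosh (c * x) ^ 3

noncomputable def coshRatioDeriv3 (c x : ℝ) : ℝ :=
  ((1 - 3 * c ^ 2) * sinh x * cosh (c * x) ^ 3 + 6 * c ^ 2 * sinh x * sinh (c * x) ^ 2 * cosh (c * x)
    - c * (3 - 5 * c ^ 2) * cosh x * sinh (c * x) * cosh (c * x) ^ 2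
    - 6 * c ^ 3 * cosh x * sinh (c * x) ^ 3) / cosh (c * x) ^ 4

section

variable (c x : ℝ)

lemma hasDerivAt_cosh_mul : HasDerivAt (fun y ↦ cosh (c * y)) (c * sinh (c * x)) x :=
  (((hasDerivAt_id x).const_mul c).cosh).congr_deriv (by simp [mul_comm])

lemma hasDerivAt_sinh_mul : HasDerivAt (fun y ↦ sinh (c * y)) (c * cosh (c * x)) x :=
  (((hasDerivAt_id x).const_mul c).sinh).congr_deriv (by simp [mul_comm])

lemma hasDerivAt_coshRatio : HasDerivAt (coshRatio c) (coshRatioDeriv c x) x := by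
  have hC := (cosh_pos (c * x)).ne'
  refine ((hasDerivAt_cosh x).div (hasDerivAt_cosh_mul c x) hC).congr_deriv ?_
  rw [coshRatioDeriv]
  ring

lemma hasDerivAt_coshRatioDeriv : HasDerivAt (coshRatioDeriv c) (coshRatioDeriv2 c x) x := by
  have hC := (cosh_pos (c * x)).ne'
  refine ((((hasDerivAt_sinh x).mul (hasDerivAt_cosh_mul c x)).sub
    (((hasDerivAt_cosh x).const_mul c).mul (hasDerivAt_sinh_mul c x))).div
    ((hasDerivAt_cosh_mul c x).pow 2) (pow_ne_zero 2 hC)).congr_deriv ?_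
  simp only [coshRatioDeriv2, Pi.pow_apply, Pi.mul_apply, Pi.sub_apply]
  field_simp
  ring

lemma hasDerivAt_coshRatioDeriv2 : HasDerivAt (coshRatioDeriv2 c) (coshRatioDeriv3 c x) x := by
  have hC := (cosh_pos (c * x)).ne'
  have t1 := ((hasDerivAt_cosh x).const_mul (1 - c ^ 2)).mul ((hasDerivAt_cosh_mul c x).pow 2)
  have t2 := (((hasDerivAt_sinh x).const_mul (2 * c)).mul (hasDerivAt_sinh_mul c x)).mul
    (hasDerivAt_cosh_mul c x)
  have t3 := ((hasDerivAt_cosh x).const_mul (2 * c ^ 2)).mul ((hasDerivAt_sinh_mul c x).pow 2)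
  refine (((t1.sub t2).add t3).div ((hasDerivAt_cosh_mul c x).pow 3)
    (pow_ne_zero 3 hC)).congr_deriv ?_
  simp only [coshRatioDeriv3, Pi.pow_apply, Pi.mul_apply, Pi.sub_apply, Pi.add_apply]
  field_simp
  ring

end

lemma mul_cosh_lt_sinh_of_lt_pi_div_two {x : ℝ} (hx0 : 0 < x) (hx1 : x < π / 2) :
    14 * x * cosh x < 27 * sinh x := by
  have hx : x < 1.575 := by linarith [pi_lt_d2]
  have hcosh := cosh_sub_sum_le_mul_cosh x 3
  have hsinh := sum_le_sinh hx0.le 3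
  norm_num [Finset.sum_range_succ, Nat.factorial] at hcosh hsinh
  have hx2 : x ^ 2 < 2.480625 := by nlinarith
  have hx4 : x ^ 4 < 6.1535003907 := by nlinarith [pow_pos hx0 2]
  have hx6 : x ^ 6 < 15.2651 := by nlinarith [pow_pos hx0 2, pow_pos hx0 4]
  have hcosh_lt : cosh x < 2.6 := by nlinarith [cosh_pos x]
  have hcosh_le : cosh x ≤ 1 + x ^ 2 / 2 + x ^ 4 / 24 + 2.6 * x ^ 6 / 720 := by
    nlinarith [mul_le_mul_of_nonneg_left hcosh_lt.le (by positivity : (0 : ℝ) ≤ x ^ 6 / 720)]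
  nlinarith [mul_le_mul_of_nonneg_left hcosh_le (by positivity : (0 : ℝ) ≤ 14 * x),
    mul_nonneg (mul_nonneg hx0.le hx0.le) (sub_nonneg.2 hx2.le),
    mul_nonneg (pow_nonneg hx0.le 4) (sub_nonneg.2 hx2.le),
    mul_nonneg hx0.le (sub_nonneg.2 hx2.le)]

lemma coshRatioDeriv3_pos {c x : ℝ} (hc0 : 0 < c) (hc3 : c ≤ 1 / 3) (hx0 : 0 < x)
    (hx1 : x < π / 2) : 0 < coshRatioDeriv3 c x := by
  refine div_pos ?_ (pow_pos (cosh_pos _) 4)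
  set C := cosh (c * x)
  set S := sinh (c * x)
  have hcx : 0 < c * x := mul_pos hc0 hx0
  have hC : 0 < C := cosh_pos _
  have hS : 0 < S := sinh_pos_iff.2 hcx
  have hCS : C ^ 2 - S ^ 2 = 1 := cosh_sq_sub_sinh_sq (c * x)
  have hSC : S ≤ c * x * C := sinh_le_mul_cosh hcx.le
  have hsinh : 0 < sinh x := sinh_pos_iff.2 hx0
  have hcosh : 0 < cosh x := cosh_pos x
  have hc2 : c ^ 2 ≤ 1 / 9 := by nlinarith
  have hc4 : c ^ 4 ≤ 1 / 81 := by nlinarith [sq_nonneg c]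
  -- The negative terms are at most `28/81 · x cosh x · C³` and the leading term is at least
  -- `2/3 · sinh x · C³`; the ratio `14/27` of these constants is what the `tanh` bound must beat.
  have hb1 : c * (3 - 5 * c ^ 2) * cosh x * S * C ^ 2 + 6 * c ^ 3 * cosh x * S ^ 3 ≤
      c * cosh x * S * C ^ 2 * (3 + c ^ 2) := by
    nlinarith [mul_pos (mul_pos (pow_pos hc0 3) hcosh) hS]
  have hb2 : c * cosh x * S * C ^ 2 * (3 + c ^ 2) ≤ c ^ 2 * x * cosh x * C ^ 3 * (3 + c ^ 2) := by
    nlinarith [mul_le_mul_of_nonneg_left hSC (by positivity : 0 ≤ c * cosh x * C ^ 2 * (3 + c ^ 2))]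
  have hP : 0 ≤ x * cosh x * C ^ 3 := by positivity
  have hb3 : c ^ 2 * x * cosh x * C ^ 3 * (3 + c ^ 2) ≤ 28 / 81 * x * cosh x * C ^ 3 := by
    nlinarith [mul_nonneg (sub_nonneg.2 hc2) hP, mul_nonneg (sub_nonneg.2 hc4) hP]
  have hd : 2 / 3 * sinh x * C ^ 3 ≤ (1 - 3 * c ^ 2) * sinh x * C ^ 3 := by
    nlinarith [mul_nonneg (sub_nonneg.2 hc2) (by positivity : 0 ≤ sinh x * C ^ 3)]
  have hmain : 28 / 81 * x * cosh x * C ^ 3 < 2 / 3 * sinh x * C ^ 3 := by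
    nlinarith [mul_lt_mul_of_pos_right (mul_cosh_lt_sinh_of_lt_pi_div_two hx0 hx1) (pow_pos hC 3)]
  have hpos : 0 < 6 * c ^ 2 * sinh x * S ^ 2 * C := by positivity
  linarith

lemma strictAntiOn_one_sub_coshRatio_div_sq {c : ℝ} (hc0 : 0 < c) (hc3 : c ≤ 1 / 3) :
    StrictAntiOn (fun x ↦ (1 - coshRatio c x) / x ^ 2) (Ioc 0 (π / 2)) := by
  have hmono := strictMonoOn_div_sq_of_hasDerivAt (V := fun x ↦ coshRatio c x - 1)
    (fun x ↦ (hasDerivAt_coshRatio c x).sub_const 1) (hasDerivAt_coshRatioDeriv c)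
    (hasDerivAt_coshRatioDeriv2 c) (by simp [coshRatio]) (by simp [coshRatioDeriv])
    (fun x hx ↦ coshRatioDeriv3_pos hc0 hc3 hx.1 hx.2)
  intro x hx y hy hxy
  simp only [← neg_sub (coshRatio c _) 1, neg_div]
  exact neg_lt_neg (hmono hx hy hxy)

lemma one_sub_coshRatio_div_sq_lt {c x : ℝ} (hc0 : 0 < c) (hc3 : c ≤ 1 / 3) (hx0 : 0 < x)
    (hx1 : x < π / 2) : (1 - coshRatio c x) / x ^ 2 < (c ^ 2 - 1) / 2 := by
  have hcx : 0 < c * x := mul_pos hc0 hx0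
  have hcx_le : c * x ≤ x := by nlinarith
  have hcx_lt : c * x < 0.525 := by nlinarith [pi_lt_d2]
  have hC : 0 < cosh (c * x) := cosh_pos _
  have htaylor := cosh_sub_sum_le_mul_cosh (c * x) 1
  have hmono := monotoneOn_cosh_sub_sum 3 hcx.le (hcx.le.trans hcx_le) hcx_le
  norm_num [Finset.sum_range_succ, Nat.factorial] at htaylor hmono
  have hcx2 : (c * x) ^ 2 < 0.275625 := by nlinarith
  have hC_lt : cosh (c * x) < 3 / 2 := by nlinarith [mul_lt_mul_of_pos_right hcx2 hC]
  have h1 : cosh (c * x) - 1 < 3 * c ^ 2 * x ^ 2 / 4 := by nlinarith [mul_pos hcx hcx]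
  have hc2 : c ^ 2 ≤ 1 / 9 := by nlinarith
  have hx2 : 0 < x ^ 2 := by positivity
  have h2 : (1 - c ^ 2) / 2 * x ^ 2 * (cosh (c * x) - 1) < (1 - c ^ 4) * x ^ 4 / 24 := by
    have := mul_lt_mul_of_pos_left h1 (by nlinarith : 0 < (1 - c ^ 2) / 2 * x ^ 2)
    nlinarith [mul_pos hx2 hx2, sq_nonneg c,
      mul_nonneg (mul_nonneg (sq_nonneg c) (sq_nonneg c)) (mul_pos hx2 hx2).le]
  have hdiff : (1 - c ^ 2) / 2 * x ^ 2 * cosh (c * x) < cosh x - cosh (c * x) := by nlinarith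
  have hratio : 1 + (1 - c ^ 2) / 2 * x ^ 2 < coshRatio c x := by
    rw [coshRatio, lt_div_iff₀ hC]
    nlinarith
  rw [div_lt_iff₀ hx2]
  nlinarith

end Real

theorem stmt_13 (p : ℕ) (hp : 3 ≤ p) (x : ℝ) (hx0 : 0 < x) (hx1 : x < π / 2) :
    4 / π ^ 2 * (1 - cosh (π / 2) / cosh (π / (2 * p))) < (1 - cosh x / cosh (x / p)) / x ^ 2 ∧
      (1 - cosh x / cosh (x / p)) / x ^ 2 < (1 - (p : ℝ) ^ 2) / (2 * (p : ℝ) ^ 2) := by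
  have hp3 : (3 : ℝ) ≤ p := by exact_mod_cast hp
  have hp0 : (p : ℝ) ≠ 0 := by positivity
  have hc0 : 0 < (p : ℝ)⁻¹ := by positivity
  have hc3 : (p : ℝ)⁻¹ ≤ 1 / 3 := by rw [one_div]; exact inv_anti₀ (by norm_num) hp3
  have hmid : (1 - cosh x / cosh (x / p)) / x ^ 2 = (1 - coshRatio (p : ℝ)⁻¹ x) / x ^ 2 := by
    rw [coshRatio, div_eq_inv_mul x]
  have hlhs : 4 / π ^ 2 * (1 - cosh (π / 2) / cosh (π / (2 * p))) =
      (1 - coshRatio (p : ℝ)⁻¹ (π / 2)) / (π / 2) ^ 2 := by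
    rw [coshRatio]
    field_simp
    ring
  have hrhs : (1 - (p : ℝ) ^ 2) / (2 * (p : ℝ) ^ 2) = (((p : ℝ)⁻¹) ^ 2 - 1) / 2 := by
    field_simp
  rw [hmid, hlhs, hrhs]
  exact ⟨strictAntiOn_one_sub_coshRatio_div_sq hc0 hc3 ⟨hx0, hx1.le⟩
      ⟨by positivity, le_rfl⟩ hx1,
    one_sub_coshRatio_div_sq_lt hc0 hc3 hx0 hx1⟩
end

section
/- For every integer p ≥ 2 and all x in (0, π/2), (4/π²)(p - sinh(π/2)/sinh(π/(2p))) < (p - sinh(x)/sinh(x/p))/x² < (1 - p²)/(6p). -/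
/-!
Telescoping `2 sinh t cosh (c t) = sinh ((c + 1) t) - sinh ((c - 1) t)` gives
`sinh (p t) = sinh t * ∑_{k < p} cosh ((p - 1 - 2k) t)`, so with `a_k = (p - 1 - 2k) / p`,
`(p - sinh x / sinh (x / p)) / x² = -∑_k (cosh (a_k x) - 1) / x²`.
Each summand equals `a_k² / 2 * (sinh v / v)²` with `v = |a_k| x / 2`, and `sinh v / v` is a
secant slope of the convex function `sinh` through `0`, hence increasing: this gives the left
inequality. The right one is `cosh u - 1 > u² / 2` summed, using `∑_k a_k² = (p² - 1) / (3p)`.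
-/

open Real Finset Set

theorem Real.strictConvexOn_sinh : StrictConvexOn ℝ (Ici 0) sinh :=
  strictConvexOn_of_deriv2_pos (convex_Ici 0) continuous_sinh.continuousOn fun x hx => by
    rw [interior_Ici] at hx
    simpa [Real.deriv_sinh, Real.deriv_cosh] using hx

theorem Real.strictMonoOn_sinh_div_self : StrictMonoOn (fun x => sinh x / x) (Ioi 0) :=
  fun x hx y hy hxy => by
    simpa using strictConvexOn_sinh.secant_strict_mono (a := 0) self_mem_Ici
      (Ioi_subset_Ici_self hx) (Ioi_subset_Ici_self hy) (ne_of_gt hx) (ne_of_gt hy) hxy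

theorem Real.cosh_sub_one_eq (x : ℝ) : cosh x - 1 = 2 * sinh (x / 2) ^ 2 := by
  have h := cosh_two_mul (x / 2)
  rw [mul_div_cancel₀ x two_ne_zero, cosh_sq'] at h
  rw [h]; ring

theorem Real.sq_div_two_lt_cosh_sub_one {x : ℝ} (hx : x ≠ 0) : x ^ 2 / 2 < cosh x - 1 := by
  have : |x / 2| < sinh |x / 2| := self_lt_sinh_iff.2 (by positivity)
  rw [cosh_sub_one_eq, ← sq_abs (sinh _), abs_sinh]
  nlinarith [abs_nonneg (x / 2), sq_abs (x / 2)]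

theorem Real.sq_div_two_le_cosh_sub_one (x : ℝ) : x ^ 2 / 2 ≤ cosh x - 1 := by
  rcases eq_or_ne x 0 with rfl | hx
  · simp
  · exact (sq_div_two_lt_cosh_sub_one hx).le

theorem Real.sinh_nat_mul (n : ℕ) (t : ℝ) :
    sinh (n * t) = sinh t * ∑ k ∈ range n, cosh ((n - 1 - 2 * k) * t) := by
  have step (k : ℕ) : sinh t * cosh ((n - 1 - 2 * k) * t) =
      sinh ((n - 2 * k) * t) / 2 - sinh ((n - 2 * (k + 1 : ℕ)) * t) / 2 := by
    have h₁ := sinh_add ((n - 1 - 2 * k) * t) t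
    have h₂ := sinh_sub ((n - 1 - 2 * k) * t) t
    push_cast
    rw [show ((n : ℝ) - 2 * k) * t = (n - 1 - 2 * k) * t + t by ring,
      show ((n : ℝ) - 2 * (k + 1)) * t = (n - 1 - 2 * k) * t - t by ring, h₁, h₂]
    ring
  rw [mul_sum, sum_congr rfl fun k _ => step k, sum_range_sub']
  simp only [Nat.cast_zero, mul_zero, sub_zero, show ((n : ℝ) - 2 * n) * t = -(n * t) by ring,
    sinh_neg]
  ring

theorem sum_range_sub_two_mul_sq (a : ℝ) (n : ℕ) :
    ∑ k ∈ range n, (a - 2 * k) ^ 2 =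
      n * a ^ 2 - 2 * a * n * (n - 1) + 2 * n * (n - 1) * (2 * n - 1) / 3 := by
  induction n with
  | zero => simp
  | succ n ih => rw [sum_range_succ, ih]; push_cast; ring

theorem sum_range_nat_sub_one_sub_two_mul_sq (n : ℕ) :
    ∑ k ∈ range n, ((n : ℝ) - 1 - 2 * k) ^ 2 = (n : ℝ) * (n ^ 2 - 1) / 3 := by
  rw [sum_range_sub_two_mul_sq]; ring

theorem Real.cosh_mul_sub_one_div_sq_eq {a y : ℝ} (hy : 0 < y) :
    (cosh (a * y) - 1) / y ^ 2 = |a| ^ 2 / 2 * (sinh (|a| / 2 * y) / (|a| / 2 * y)) ^ 2 := by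
  rcases eq_or_ne a 0 with rfl | ha
  · simp
  rw [cosh_sub_one_eq, ← sq_abs (sinh _), abs_sinh, abs_div, abs_mul, abs_of_pos hy, abs_two,
    div_mul_eq_mul_div]
  field_simp

theorem Real.strictMonoOn_cosh_mul_sub_one_div_sq {a : ℝ} (ha : a ≠ 0) :
    StrictMonoOn (fun y => (cosh (a * y) - 1) / y ^ 2) (Ioi 0) := fun y hy z hz hyz => by
  have hb : 0 < |a| / 2 := by positivity
  have hby : 0 < |a| / 2 * y := mul_pos hb hy
  have hlt := strictMonoOn_sinh_div_self hby (mul_pos hb hz) (mul_lt_mul_of_pos_left hyz hb)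
  simp only [cosh_mul_sub_one_div_sq_eq hy, cosh_mul_sub_one_div_sq_eq hz]
  gcongr

theorem Real.monotoneOn_cosh_mul_sub_one_div_sq (a : ℝ) :
    MonotoneOn (fun y => (cosh (a * y) - 1) / y ^ 2) (Ioi 0) := by
  rcases eq_or_ne a 0 with rfl | ha
  · simp [monotoneOn_const]
  · exact (strictMonoOn_cosh_mul_sub_one_div_sq ha).monotoneOn

section CoshSums

variable {ι : Type*} {s : Finset ι} {a : ι → ℝ} {i : ι}

theorem strictMonoOn_sum_cosh_mul_sub_one_div_sq (hi : i ∈ s) (hai : a i ≠ 0) :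
    StrictMonoOn (fun y => ∑ j ∈ s, (cosh (a j * y) - 1) / y ^ 2) (Ioi 0) :=
  fun _ hy _ hz hyz => sum_lt_sum (fun j _ => monotoneOn_cosh_mul_sub_one_div_sq (a j) hy hz hyz.le)
    ⟨i, hi, strictMonoOn_cosh_mul_sub_one_div_sq hai hy hz hyz⟩

theorem sum_sq_div_two_mul_sq_lt_sum_cosh_sub_one (hi : i ∈ s) (hai : a i ≠ 0) {y : ℝ}
    (hy : y ≠ 0) : (∑ j ∈ s, a j ^ 2) / 2 * y ^ 2 < ∑ j ∈ s, (cosh (a j * y) - 1) := by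
  calc (∑ j ∈ s, a j ^ 2) / 2 * y ^ 2 = ∑ j ∈ s, (a j * y) ^ 2 / 2 := by
        rw [sum_div, sum_mul]; exact sum_congr rfl fun j _ => by ring
    _ < ∑ j ∈ s, (cosh (a j * y) - 1) :=
        sum_lt_sum (fun j _ => sq_div_two_le_cosh_sub_one _)
          ⟨i, hi, sq_div_two_lt_cosh_sub_one (mul_ne_zero hai hy)⟩

end CoshSums

theorem natCast_sub_sinh_div_sinh_div_eq {p : ℕ} (hp : p ≠ 0) {y : ℝ} (hy : y ≠ 0) :
    (p : ℝ) - sinh y / sinh (y / p) =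
      -∑ k ∈ range p, (cosh ((p - 1 - 2 * k) / p * y) - 1) := by
  have hp' : (p : ℝ) ≠ 0 := Nat.cast_ne_zero.2 hp
  have hs : sinh (y / p) ≠ 0 := sinh_ne_zero.2 (div_ne_zero hy hp')
  have h := sinh_nat_mul p (y / p)
  rw [mul_div_cancel₀ y hp'] at h
  rw [h, mul_div_cancel_left₀ _ hs, sum_sub_distrib, sum_const, card_range, nsmul_one]
  simp only [div_mul_eq_mul_div, mul_div_assoc]
  ring

theorem stmt_14 (p : ℕ) (hp : 2 ≤ p) (x : ℝ) (hx0 : 0 < x) (hx1 : x < π / 2) :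
    4 / π ^ 2 * ((p : ℝ) - sinh (π / 2) / sinh (π / (2 * p))) <
        ((p : ℝ) - sinh x / sinh (x / p)) / x ^ 2 ∧
      ((p : ℝ) - sinh x / sinh (x / p)) / x ^ 2 < (1 - (p : ℝ) ^ 2) / (6 * p) := by
  have hp0 : (0 : ℝ) < p := by positivity
  have hp2 : (2 : ℝ) ≤ p := by exact_mod_cast hp
  set a : ℕ → ℝ := fun k => ((p : ℝ) - 1 - 2 * k) / p with ha
  have h0 : 0 ∈ range p := mem_range.2 (by omega)
  have ha0 : a 0 ≠ 0 := by simp only [ha]; push_cast; exact div_ne_zero (by linarith) hp0.ne'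
  have hsq : ∑ k ∈ range p, a k ^ 2 = ((p : ℝ) ^ 2 - 1) / (3 * p) := by
    simp only [ha, div_pow, ← sum_div, sum_range_nat_sub_one_sub_two_mul_sq]
    field_simp
  have hrepr {y : ℝ} (hy : 0 < y) : ((p : ℝ) - sinh y / sinh (y / p)) / y ^ 2 =
      -∑ k ∈ range p, (cosh (a k * y) - 1) / y ^ 2 := by
    rw [natCast_sub_sinh_div_sinh_div_eq (by omega) hy.ne', neg_div, sum_div]
  constructor
  · have hpi : (0 : ℝ) < π / 2 := by positivity
    have hmono := strictMonoOn_sum_cosh_mul_sub_one_div_sq h0 ha0 hx0 hpi hx1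
    have hscale : 4 / π ^ 2 * ((p : ℝ) - sinh (π / 2) / sinh (π / (2 * p))) =
        ((p : ℝ) - sinh (π / 2) / sinh (π / 2 / p)) / (π / 2) ^ 2 := by
      rw [div_div]; field_simp; ring
    rw [hscale, hrepr hpi, hrepr hx0]
    exact neg_lt_neg hmono
  · have hlow := sum_sq_div_two_mul_sq_lt_sum_cosh_sub_one h0 ha0 hx0.ne'
    rw [hsq, ← lt_div_iff₀ (by positivity)] at hlow
    rw [hrepr hx0, ← sum_div,
      show (1 - (p : ℝ) ^ 2) / (6 * p) = -(((p : ℝ) ^ 2 - 1) / (3 * p) / 2) by ring]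
    exact neg_lt_neg hlow
end

section
/- For all x in (0, π/2), (1 - cosh(x)/cosh(x/2))/x² > -3/8 and (1 - cosh(x)/cosh(x/2))/x² < (4/π²)(1 - cosh(π/2)/cosh(π/4)). -/
/-!
Put `x = 2t` and `c = cosh t`. Since `cosh 2t = 2c² - 1`, the quantity equals `-h(t) / 4` with
`h(t) = (2c - 1 - 1/c) / t²`. The lower bound is `h(t) < 3/2`, and the upper bound is the strict
decrease of `h` on `(0, 1] ∋ π/4`; the sign of `h'` is that of
`t sinh t (2c² + 1) - 2c (2c + 1)(c - 1)`. On `[0, 1]` the Taylor bounds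
`1 + t²/2 + t⁴/24 ≤ cosh t ≤ 1 + t²/2 + t⁴/24 + t⁶/500` and `sinh t ≤ t + t³/6 + t⁵/100`
reduce both inequalities to polynomial inequalities in `t²`.
-/

open Real Set

lemma one_add_sq_div_two_add_pow_four_div_le_cosh (x : ℝ) :
    1 + x ^ 2 / 2 + x ^ 4 / 24 ≤ cosh x := by
  have h := sum_le_hasSum (Finset.range 3)
    (fun n _ => div_nonneg ((even_two_mul n).pow_nonneg x) (Nat.cast_nonneg _)) (hasSum_cosh x)
  norm_num [Finset.sum_range_succ, Nat.factorial] at h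
  linarith

lemma cosh_le_of_abs_le_one {x : ℝ} (hx : |x| ≤ 1) :
    cosh x ≤ 1 + x ^ 2 / 2 + x ^ 4 / 24 + x ^ 6 / 500 := by
  have hpos := (abs_le.1 (Real.exp_bound hx (n := 8) (by norm_num))).2
  have hneg := (abs_le.1 (Real.exp_bound (x := -x) (by rwa [abs_neg]) (n := 8) (by norm_num))).2
  rw [abs_neg] at hneg
  norm_num [Finset.sum_range_succ, Nat.factorial] at hpos hneg
  have h8 : |x| ^ 8 ≤ x ^ 6 := by
    rw [← (by decide : Even 6).pow_abs]
    exact pow_le_pow_of_le_one (abs_nonneg x) hx (by norm_num)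
  rw [cosh_eq]
  nlinarith [(by decide : Even 6).pow_nonneg x]

lemma sinh_le_of_nonneg_of_le_one {x : ℝ} (h0 : 0 ≤ x) (h1 : x ≤ 1) :
    sinh x ≤ x + x ^ 3 / 6 + x ^ 5 / 100 := by
  have hx : |x| ≤ 1 := by rwa [abs_of_nonneg h0]
  have hpos := (abs_le.1 (Real.exp_bound hx (n := 7) (by norm_num))).2
  have hneg := (abs_le.1 (Real.exp_bound (x := -x) (by rwa [abs_neg]) (n := 7) (by norm_num))).1
  rw [abs_neg, abs_of_nonneg h0] at *
  norm_num [Finset.sum_range_succ, Nat.factorial] at hpos hneg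
  have h7 : x ^ 7 ≤ x ^ 5 := pow_le_pow_of_le_one h0 h1 (by norm_num)
  rw [sinh_eq]
  nlinarith [pow_nonneg h0 5]

noncomputable def coshExcess (t : ℝ) : ℝ := (2 * cosh t - 1 - (cosh t)⁻¹) / t ^ 2

lemma one_sub_cosh_div_cosh_half_div_sq (x : ℝ) :
    (1 - cosh x / cosh (x / 2)) / x ^ 2 = -coshExcess (x / 2) / 4 := by
  have hdouble : cosh x = 2 * cosh (x / 2) ^ 2 - 1 := by
    have h := cosh_two_mul (x / 2)
    rw [mul_div_cancel₀ x two_ne_zero, sinh_sq] at h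
    linarith
  have hc : cosh (x / 2) ≠ 0 := (cosh_pos _).ne'
  rcases eq_or_ne x 0 with rfl | hx
  · simp [coshExcess]
  · rw [coshExcess, hdouble]
    field_simp
    ring

lemma hasDerivAt_coshExcess {t : ℝ} (ht : t ≠ 0) :
    HasDerivAt coshExcess
      ((t * sinh t * (2 * cosh t ^ 2 + 1) - 2 * cosh t * (2 * cosh t + 1) * (cosh t - 1))
        / (cosh t ^ 2 * t ^ 3)) t := by
  have hc : cosh t ≠ 0 := (cosh_pos t).ne'
  have h := ((((hasDerivAt_cosh t).const_mul 2).sub_const 1).sub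
    ((hasDerivAt_cosh t).inv hc)).div (hasDerivAt_pow 2 t) (pow_ne_zero 2 ht)
  refine h.congr_deriv ?_
  simp only [Pi.sub_apply, Pi.inv_apply]
  field_simp
  ring

lemma coshExcess_lt_three_halves {t : ℝ} (h0 : 0 < t) (h1 : t ≤ 1) : coshExcess t < 3 / 2 := by
  have hform : coshExcess t = (2 * cosh t ^ 2 - cosh t - 1) / cosh t / t ^ 2 := by
    rw [coshExcess]
    field_simp
  have hlow := one_add_sq_div_two_add_pow_four_div_le_cosh t
  have hup := cosh_le_of_abs_le_one (abs_le.2 ⟨by linarith, h1⟩)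
  set c := cosh t
  set u := t ^ 2 with hu
  have hc0 : 0 < c := cosh_pos t
  have hu0 : 0 < u := by positivity
  have hu1 : u ≤ 1 := pow_le_one₀ h0.le h1
  replace hlow : 1 + u / 2 + u ^ 2 / 24 ≤ c := by simpa [hu, ← pow_mul] using hlow
  replace hup : c ≤ 1 + u / 2 + u ^ 2 / 24 + u ^ 3 / 500 := by simpa [hu, ← pow_mul] using hup
  have hpoly : 2 * (1 + u / 2 + u ^ 2 / 24 + u ^ 3 / 500) ^ 2 - 1
      < (1 + 3 / 2 * u) * (1 + u / 2 + u ^ 2 / 24) := by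
    have h : ∀ k, 2 ≤ k → u ^ k ≤ u ^ 2 := fun k hk => pow_le_pow_of_le_one hu0.le hu1 hk
    nlinarith [pow_pos hu0 2, h 3 (by norm_num), h 4 (by norm_num), h 5 (by norm_num),
      h 6 (by norm_num)]
  have hquad : 2 * c ^ 2 - c - 1 < 3 / 2 * u * c := by
    nlinarith [mul_le_mul_of_nonneg_left hlow (by positivity : (0 : ℝ) ≤ 1 + 3 / 2 * u)]
  rw [hform, div_lt_iff₀ hu0, div_lt_iff₀ hc0]
  linarith

lemma mul_sinh_mul_lt_of_pos_of_le_one {t : ℝ} (h0 : 0 < t) (h1 : t ≤ 1) :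
    t * sinh t * (2 * cosh t ^ 2 + 1) < 2 * cosh t * (2 * cosh t + 1) * (cosh t - 1) := by
  have hlow := one_add_sq_div_two_add_pow_four_div_le_cosh t
  have hup := cosh_le_of_abs_le_one (abs_le.2 ⟨by linarith, h1⟩)
  have hsinh : t * sinh t ≤ t * (t + t ^ 3 / 6 + t ^ 5 / 100) := by
    gcongr
    exact sinh_le_of_nonneg_of_le_one h0.le h1
  set c := cosh t
  set u := t ^ 2 with hu
  have hu0 : 0 < u := by positivity
  have hu1 : u ≤ 1 := pow_le_one₀ h0.le h1
  replace hlow : 1 + u / 2 + u ^ 2 / 24 ≤ c := by simpa [hu, ← pow_mul] using hlow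
  replace hup : c ≤ 1 + u / 2 + u ^ 2 / 24 + u ^ 3 / 500 := by simpa [hu, ← pow_mul] using hup
  replace hsinh : t * sinh t ≤ u + u ^ 2 / 6 + u ^ 3 / 100 := by
    convert hsinh using 1
    ring
  have hpoly : (u + u ^ 2 / 6 + u ^ 3 / 100) * (2 * (1 + u / 2 + u ^ 2 / 24 + u ^ 3 / 500) ^ 2 + 1)
      < 2 * (1 + u / 2 + u ^ 2 / 24) * (2 * (1 + u / 2 + u ^ 2 / 24) + 1)
        * ((1 + u / 2 + u ^ 2 / 24) - 1) := by
    have h : ∀ k, 2 ≤ k → u ^ k ≤ u ^ 2 := fun k hk => pow_le_pow_of_le_one hu0.le hu1 hk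
    nlinarith [pow_pos hu0 2, h 3 (by norm_num), h 4 (by norm_num), h 5 (by norm_num),
      h 6 (by norm_num), h 7 (by norm_num), h 8 (by norm_num), h 9 (by norm_num)]
  have hc1 : 1 ≤ c := one_le_cosh t
  have hlow1 : 1 ≤ 1 + u / 2 + u ^ 2 / 24 := by nlinarith [sq_nonneg u]
  have hlhs : t * sinh t * (2 * c ^ 2 + 1)
      ≤ (u + u ^ 2 / 6 + u ^ 3 / 100) * (2 * (1 + u / 2 + u ^ 2 / 24 + u ^ 3 / 500) ^ 2 + 1) := by
    gcongr
  have hrhs : 2 * (1 + u / 2 + u ^ 2 / 24) * (2 * (1 + u / 2 + u ^ 2 / 24) + 1)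
        * ((1 + u / 2 + u ^ 2 / 24) - 1) ≤ 2 * c * (2 * c + 1) * (c - 1) := by
    gcongr
  linarith

lemma strictAntiOn_coshExcess : StrictAntiOn coshExcess (Ioc 0 1) := by
  refine strictAntiOn_of_deriv_neg (convex_Ioc 0 1)
    (fun t ht => (hasDerivAt_coshExcess ht.1.ne').continuousAt.continuousWithinAt)
    (fun t ht => ?_)
  rw [interior_Ioc] at ht
  obtain ⟨ht0, ht1⟩ := ht
  rw [(hasDerivAt_coshExcess ht0.ne').deriv]
  exact div_neg_of_neg_of_pos (by linarith [mul_sinh_mul_lt_of_pos_of_le_one ht0 ht1.le])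
    (by positivity)

theorem stmt_15 (x : ℝ) (hx0 : 0 < x) (hx1 : x < π / 2) :
    (1 - cosh x / cosh (x / 2)) / x ^ 2 > -(3 / 8) ∧
      (1 - cosh x / cosh (x / 2)) / x ^ 2 < 4 / π ^ 2 * (1 - cosh (π / 2) / cosh (π / 4)) := by
  have hx : x / 2 ∈ Ioc 0 1 := ⟨by positivity, by linarith [pi_le_four]⟩
  have hπ : π / 4 ∈ Ioc 0 1 := ⟨by positivity, by linarith [pi_le_four]⟩
  have hend : 4 / π ^ 2 * (1 - cosh (π / 2) / cosh (π / 4)) = -coshExcess (π / 4) / 4 := by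
    have h := one_sub_cosh_div_cosh_half_div_sq (π / 2)
    rw [div_div, show π / (2 * 2) = π / 4 by ring] at h
    rw [← h]
    ring
  rw [one_sub_cosh_div_cosh_half_div_sq, hend]
  constructor
  · linarith [coshExcess_lt_three_halves hx.1 hx.2]
  · linarith [strictAntiOn_coshExcess hx hπ (by linarith)]
end

section
/- For every integer p ≥ 2 and all y in (0, π/(2p)), (p/6)((1 - p²)y² + 6) < sin(py)/sin(y) < p - (4/π²)(p - 1/sin(π/(2p)))·p·y². -/
/-! Writing `sin (p y) / sin y` as the Dirichlet-type sum `∑_{k < p} cos ((2k + 1 - p) y)`, both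
bounds follow term by term from Taylor bounds for `cos`, using `∑_{k < p} (2k + 1 - p)² = p (p² - 1) / 3`.
The lower bound uses `1 - x² / 2 < cos x`. For the upper bound, on `|x| ≤ π / 2` the quartic
Taylor bound gives `cos x ≤ 1 - (1/2 - π²/96) x²`; since `1 / sin (π / (2p)) > 2p / π`, the
resulting coefficient beats the one in the statement by a numerical margin. -/

open Real Finset

theorem cos_le_one_sub_sq_div_two_add_pow_four_div (x : ℝ) :
    cos x ≤ 1 - x ^ 2 / 2 + x ^ 4 / 24 := by
  wlog hx : 0 ≤ x generalizing x
  · simpa [Even.neg_pow ⟨2, rfl⟩] using this (-x) (by linarith)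
  let f (t : ℝ) : ℝ := 1 - t ^ 2 / 2 + t ^ 4 / 24 - cos t
  have hderiv (t : ℝ) : deriv f t = sin t - (t - t ^ 3 / 6) := by
    simp (disch := fun_prop) [f]
    ring
  have hmono : MonotoneOn f (Set.Ici 0) := by
    apply monotoneOn_of_deriv_nonneg (convex_Ici 0) (by fun_prop) (by fun_prop)
    intro t ht
    rw [interior_Ici] at ht
    simpa [hderiv] using sin_ge_sub_cube (le_of_lt ht)
  have h := hmono Set.self_mem_Ici hx hx
  simp only [f, ne_eq, OfNat.ofNat_ne_zero, not_false_eq_true, zero_pow, zero_div, sub_zero,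
    add_zero, cos_zero, sub_self, sub_nonneg] at h
  exact h

theorem cos_le_one_sub_mul_sq_of_sq_le {x : ℝ} (hx : x ^ 2 ≤ (π / 2) ^ 2) :
    cos x ≤ 1 - (1 / 2 - π ^ 2 / 96) * x ^ 2 := by
  nlinarith [cos_le_one_sub_sq_div_two_add_pow_four_div x, sq_nonneg x]

theorem sin_natCast_mul_div_sin_eq_sum_cos (n : ℕ) {y : ℝ} (hy : sin y ≠ 0) :
    sin (n * y) / sin y = ∑ k ∈ range n, cos ((2 * k + 1 - n : ℝ) * y) := by
  have h := Real.sin_mul_sum_cos n (2 * y) ((1 - n) * y)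
  rw [mul_div_cancel_left₀ _ (two_ne_zero' ℝ),
    show (n - 1 : ℝ) * (2 * y) / 2 + (1 - n) * y = 0 by ring, cos_zero, mul_one, mul_div_assoc,
    mul_div_cancel_left₀ _ (two_ne_zero' ℝ)] at h
  rw [← h, mul_div_cancel_left₀ _ hy]
  congr! 2 with k
  ring

theorem sum_range_two_mul_add_sq (b : ℝ) (n : ℕ) :
    ∑ k ∈ range n, (2 * k + b) ^ 2 =
      n * b ^ 2 + 2 * b * n * (n - 1) + 2 * n * (n - 1) * (2 * n - 1) / 3 := by
  induction n with
  | zero => simp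
  | succ n ih => rw [sum_range_succ, ih]; push_cast; ring

theorem sum_range_two_mul_add_one_sub_sq (n : ℕ) :
    ∑ k ∈ range n, (2 * k + 1 - n : ℝ) ^ 2 = n * (n ^ 2 - 1) / 3 := by
  simp_rw [add_sub_assoc, sum_range_two_mul_add_sq]
  ring

theorem sq_two_mul_add_one_sub_le {n k : ℕ} (hk : k < n) :
    (2 * k + 1 - n : ℝ) ^ 2 ≤ (n - 1) ^ 2 := by
  have hkn : (k : ℝ) + 1 ≤ n := by exact_mod_cast hk
  nlinarith [k.cast_nonneg (α := ℝ)]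

theorem lt_sin_natCast_mul_div_sin {n : ℕ} (hn : 2 ≤ n) {y : ℝ} (hy : sin y ≠ 0) :
    (n : ℝ) / 6 * ((1 - (n : ℝ) ^ 2) * y ^ 2 + 6) < sin (n * y) / sin y := by
  have hy0 : y ≠ 0 := by rintro rfl; exact hy sin_zero
  have hn1 : (1 : ℝ) ≤ n - 1 := by
    have : (2 : ℝ) ≤ n := by exact_mod_cast hn
    linarith
  rw [sin_natCast_mul_div_sin_eq_sum_cos n hy]
  calc (n : ℝ) / 6 * ((1 - (n : ℝ) ^ 2) * y ^ 2 + 6)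
      = ∑ k ∈ range n, (1 - ((2 * k + 1 - n : ℝ) * y) ^ 2 / 2) := by
        simp only [mul_pow, sum_sub_distrib, ← sum_div, ← sum_mul,
          sum_range_two_mul_add_one_sub_sq, sum_const, card_range, nsmul_eq_mul, mul_one]
        ring
    _ < ∑ k ∈ range n, cos ((2 * k + 1 - n : ℝ) * y) := by
        refine sum_lt_sum (fun _ _ => one_sub_sq_div_two_le_cos)
          ⟨0, mem_range.mpr (by omega), one_sub_sq_div_two_lt_cos (mul_ne_zero ?_ hy0)⟩
        push_cast
        linarith

theorem sin_natCast_mul_div_sin_le {n : ℕ} {y : ℝ} (hy : sin y ≠ 0)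
    (hny : ((n - 1) * y) ^ 2 ≤ (π / 2) ^ 2) :
    sin (n * y) / sin y ≤ n - (1 / 2 - π ^ 2 / 96) * (n * (n ^ 2 - 1) / 3) * y ^ 2 := by
  rw [sin_natCast_mul_div_sin_eq_sum_cos n hy]
  calc ∑ k ∈ range n, cos ((2 * k + 1 - n : ℝ) * y)
      ≤ ∑ k ∈ range n, (1 - (1 / 2 - π ^ 2 / 96) * ((2 * k + 1 - n : ℝ) * y) ^ 2) := by
        refine sum_le_sum fun k hk => cos_le_one_sub_mul_sq_of_sq_le (hny.trans' ?_)
        rw [mul_pow, mul_pow]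
        exact mul_le_mul_of_nonneg_right
          (sq_two_mul_add_one_sub_le (mem_range.mp hk)) (sq_nonneg y)
    _ = n - (1 / 2 - π ^ 2 / 96) * (n * (n ^ 2 - 1) / 3) * y ^ 2 := by
        simp only [mul_pow, sum_sub_distrib, ← mul_sum, ← sum_mul,
          sum_range_two_mul_add_one_sub_sq, sum_const, card_range, nsmul_eq_mul, mul_one]
        ring

theorem four_div_pi_sq_mul_sub_one_div_sin_lt {x : ℝ} (hx : 2 ≤ x) :
    4 / π ^ 2 * (x - 1 / sin (π / (2 * x))) < (1 / 2 - π ^ 2 / 96) * ((x ^ 2 - 1) / 3) := by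
  have hpos : 0 < π / (2 * x) := by positivity
  have hsin_pos : 0 < sin (π / (2 * x)) :=
    sin_pos_of_pos_of_lt_pi hpos (by rw [div_lt_iff₀ (by positivity)]; nlinarith [pi_pos])
  have hinv : 2 * x / π < 1 / sin (π / (2 * x)) := by
    simpa using one_div_lt_one_div_of_lt hsin_pos (sin_lt hpos)
  calc 4 / π ^ 2 * (x - 1 / sin (π / (2 * x)))
      < 4 / π ^ 2 * (x - 2 * x / π) := by gcongr
    _ = 4 * (π - 2) / π ^ 3 * x := by field_simp
    _ ≤ (1 / 2 - π ^ 2 / 96) * ((x ^ 2 - 1) / 3) := by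
        have hπ3 : 30.9 < π ^ 3 := by
          have := pow_lt_pow_left₀ pi_gt_d2 (by norm_num) three_ne_zero
          norm_num at this ⊢
          linarith
        have hπ2 : π ^ 2 < 10 := by nlinarith [pi_lt_d2, pi_pos]
        have hκ : 12 < (1 / 2 - π ^ 2 / 96) * π ^ 3 := by nlinarith
        have hx' : x / 2 ≤ (x ^ 2 - 1) / 3 := by nlinarith
        rw [div_mul_eq_mul_div, div_le_iff₀ (by positivity)]
        nlinarith [mul_le_mul hκ.le hx' (by linarith) (by linarith), pi_lt_d2]

theorem stmt_16 (p : ℕ) (hp : 2 ≤ p) (y : ℝ) (hy0 : 0 < y) (hy1 : y < π / (2 * p)) :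
    (p : ℝ) / 6 * ((1 - (p : ℝ) ^ 2) * y ^ 2 + 6) < sin (p * y) / sin y ∧
      sin (p * y) / sin y <
        (p : ℝ) - 4 / π ^ 2 * ((p : ℝ) - 1 / sin (π / (2 * p))) * p * y ^ 2 := by
  have hP : (2 : ℝ) ≤ p := by exact_mod_cast hp
  have hPy : p * y < π / 2 := by
    rw [lt_div_iff₀ (by positivity)] at hy1
    linarith
  have hsin : 0 < sin y := sin_pos_of_pos_of_lt_pi hy0 (by nlinarith [pi_pos])
  refine ⟨lt_sin_natCast_mul_div_sin hp hsin.ne', ?_⟩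
  have hpy : ((p - 1) * y) ^ 2 ≤ (π / 2) ^ 2 :=
    pow_le_pow_left₀ (by nlinarith) (by nlinarith) 2
  calc sin (p * y) / sin y
      ≤ p - (1 / 2 - π ^ 2 / 96) * (p * (p ^ 2 - 1) / 3) * y ^ 2 :=
        sin_natCast_mul_div_sin_le hsin.ne' hpy
    _ < p - 4 / π ^ 2 * ((p : ℝ) - 1 / sin (π / (2 * p))) * p * y ^ 2 := by
        have := mul_lt_mul_of_pos_right (four_div_pi_sq_mul_sub_one_div_sin_lt hP)
          (by positivity : (0 : ℝ) < p * y ^ 2)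
        linarith
end

section
/- For all y in (0, π/14), 7 - 56y² < 64cos⁶(y) - 80cos⁴(y) + 24cos²(y) - 1 < 7 - (196(7 - 1/sin(π/14))/π²)·y². -/
open Real

private lemma sin7 (x : ℝ) :
    sin (7 * x) = sin x * (64 * cos x ^ 6 - 80 * cos x ^ 4 + 24 * cos x ^ 2 - 1) := by
  have h : (7 : ℝ) * x = 2 * x + 2 * x + (2 * x + x) := by ring
  rw [h]
  simp only [sin_add, cos_add, sin_two_mul, cos_two_mul]
  linear_combination (-32 * sin x * cos x ^ 4 + 12 * sin x * cos x ^ 2) * sin_sq_add_cos_sq x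

private lemma decomp (x : ℝ) :
    7 - (64 * cos x ^ 6 - 80 * cos x ^ 4 + 24 * cos x ^ 2 - 1) =
      4 * sin x ^ 2 + 4 * sin (2 * x) ^ 2 + 4 * sin (3 * x) ^ 2 := by
  rw [sin_two_mul, sin_three_mul]
  linear_combination (-64 * sin x ^ 4 + 64 * sin x ^ 2 * cos x ^ 2 + 32 * sin x ^ 2
    - 64 * cos x ^ 4 + 16 * cos x ^ 2 - 8) * sin_sq_add_cos_sq x

private lemma sqc {a b A B : ℝ} (ha : 0 < a) (hB : 0 ≤ B) (h : a * B < b * A) :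
    a ^ 2 * B ^ 2 < b ^ 2 * A ^ 2 := by
  nlinarith [mul_self_lt_mul_self (mul_nonneg ha.le hB) h]

private lemma chord {a b : ℝ} (ha : 0 < a) (hab : a < b) (hb : b ≤ π) :
    a * sin b < b * sin a := by
  have hb0 : 0 < b := ha.trans hab
  have h0 : (0 : ℝ) ∈ Set.Icc 0 π := by constructor <;> positivity
  have hbI : b ∈ Set.Icc 0 π := ⟨hb0.le, hb⟩
  have hp : 0 < 1 - a / b := by
    rw [sub_pos, div_lt_one hb0]; exact hab
  have hq : 0 < a / b := by positivity
  have hne : (0 : ℝ) ≠ b := hb0.ne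
  have hkey := strictConcaveOn_sin_Icc.2 h0 hbI hne hp hq (by ring)
  simp only [smul_eq_mul, mul_zero, zero_add, Real.sin_zero] at hkey
  have habb : a / b * b = a := div_mul_cancel₀ a hb0.ne'
  rw [habb] at hkey
  -- hkey : (1 - a/b) * 0 + a/b * sin b < sin a, i.e. a/b * sin b < sin a
  have h2 : a / b * sin b < sin a := by linarith [hkey]
  calc a * sin b = (a / b * sin b) * b := by field_simp
    _ < sin a * b := by exact mul_lt_mul_of_pos_right h2 hb0
    _ = b * sin a := by ring

theorem stmt_17 (y : ℝ) (hy0 : 0 < y) (hy1 : y < π / 14) :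
    7 - 56 * y ^ 2 < 64 * cos y ^ 6 - 80 * cos y ^ 4 + 24 * cos y ^ 2 - 1 ∧
      64 * cos y ^ 6 - 80 * cos y ^ 4 + 24 * cos y ^ 2 - 1 <
        7 - 196 * (7 - 1 / sin (π / 14)) / π ^ 2 * y ^ 2 := by
  have hpi : 0 < π := pi_pos
  set Y : ℝ := π / 14 with hY
  clear_value Y
  have hY0 : 0 < Y := by rw [hY]; positivity
  have hYpi : Y < π := by rw [hY]; nlinarith
  have hS : 0 < sin Y := sin_pos_of_pos_of_lt_pi hY0 hYpi
  have h7Y : sin (7 * Y) = 1 := by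
    rw [show 7 * Y = π / 2 by rw [hY]; ring, sin_pi_div_two]
  have hPY : 1 / sin Y = 64 * cos Y ^ 6 - 80 * cos Y ^ 4 + 24 * cos Y ^ 2 - 1 := by
    rw [eq_comm, eq_div_iff hS.ne', mul_comm, ← sin7, h7Y]
  have h3Ypi : 3 * Y < π := by rw [hY]; nlinarith
  have h2Ypi : 2 * Y < π := by nlinarith
  have h1p : 0 < sin y := sin_pos_of_pos_of_lt_pi hy0 (by nlinarith)
  have h2p : 0 < sin (2 * y) := sin_pos_of_pos_of_lt_pi (by positivity) (by nlinarith)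
  have h3p : 0 < sin (3 * y) := sin_pos_of_pos_of_lt_pi (by positivity) (by nlinarith)
  have h1l : sin y < y := Real.sin_lt hy0
  have h2l : sin (2 * y) < 2 * y := Real.sin_lt (by positivity)
  have h3l : sin (3 * y) < 3 * y := Real.sin_lt (by positivity)
  have hd := decomp y
  constructor
  · nlinarith [hd, h1l, h2l, h3l, h1p, h2p, h3p, mul_pos h1p h1p, mul_pos h2p h2p,
      mul_pos h3p h3p]
  · have hdY := decomp Y
    have sY1 : 0 < sin Y := hS
    have sY2 : 0 < sin (2 * Y) := sin_pos_of_pos_of_lt_pi (by positivity) h2Ypi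
    have sY3 : 0 < sin (3 * Y) := sin_pos_of_pos_of_lt_pi (by positivity) h3Ypi
    have c1 : y * sin Y < Y * sin y := chord hy0 hy1 hYpi.le
    have c2 : (2 * y) * sin (2 * Y) < (2 * Y) * sin (2 * y) :=
      chord (by linarith) (by linarith) h2Ypi.le
    have c3 : (3 * y) * sin (3 * Y) < (3 * Y) * sin (3 * y) :=
      chord (by linarith) (by linarith) h3Ypi.le
    have q1 : y ^ 2 * sin Y ^ 2 < Y ^ 2 * sin y ^ 2 := sqc hy0 sY1.le c1
    have q2 : (2 * y) ^ 2 * sin (2 * Y) ^ 2 < (2 * Y) ^ 2 * sin (2 * y) ^ 2 :=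
      sqc (by linarith) sY2.le c2
    have q3 : (3 * y) ^ 2 * sin (3 * Y) ^ 2 < (3 * Y) ^ 2 * sin (3 * y) ^ 2 :=
      sqc (by linarith) sY3.le c3
    have hA : 7 - 1 / sin Y = 4 * sin Y ^ 2 + 4 * sin (2 * Y) ^ 2 + 4 * sin (3 * Y) ^ 2 := by
      rw [hPY]; linarith [hdY]
    have hpi2 : π ^ 2 = 196 * Y ^ 2 := by rw [hY]; ring
    have key : 196 * (7 - 1 / sin Y) / π ^ 2 * y ^ 2 <
        4 * sin y ^ 2 + 4 * sin (2 * y) ^ 2 + 4 * sin (3 * y) ^ 2 := by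
      rw [hA, div_mul_eq_mul_div, div_lt_iff₀ (by positivity : (0:ℝ) < π ^ 2), hpi2]
      linarith only [q1, q2, q3]
    linarith [hd, key]
end

section
/- For every integer p ≥ 2 and all y in (0, π/(2p)), the Chebyshev polynomial of the second kind satisfies (p/6)((1 - p²)y² + 6) < U_{p-1}(cos y) < p - (4/π²)(p - 1/sin(π/(2p)))·p·y². -/
/-!
Since `U_{p-1}(cos y) = sin (p y) / sin y`, both bounds compare `sin (p y)` with a multiple of
`sin y`. Replacing each sine by a Taylor polynomial of the right parity (the alternating Taylor
polynomials of `sin` and `cos` bound them from alternating sides on `[0, ∞)`) reduces them to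
polynomial inequalities in `p` and `y`, which hold because `p y < π / 2`. For the upper bound
one also needs `0 < c < p² / 5` for its coefficient `c = 4 / π² (p - 1 / sin (π / (2p))) p`,
which follows from Jordan's inequality `2x / π < sin x < x` at `x = π / (2p)`.
-/

open Real

lemma nonneg_of_hasDerivAt_nonneg {f f' : ℝ → ℝ} (hf : ∀ x, 0 ≤ x → HasDerivAt f (f' x) x)
    (hf₀ : f 0 = 0) (hf' : ∀ x, 0 ≤ x → 0 ≤ f' x) {x : ℝ} (hx : 0 ≤ x) : 0 ≤ f x := by
  have hmono : MonotoneOn f (Set.Ici 0) :=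
    monotoneOn_of_hasDerivWithinAt_nonneg (convex_Ici 0)
      (fun t ht => (hf t ht).continuousAt.continuousWithinAt)
      (fun t ht => (hf t (interior_subset ht)).hasDerivWithinAt)
      (fun t ht => hf' t (interior_subset ht))
  simpa [hf₀] using hmono Set.self_mem_Ici hx hx

section

variable {x : ℝ}

lemma cos_le_taylor4 (hx : 0 ≤ x) : cos x ≤ 1 - x ^ 2 / 2 + x ^ 4 / 24 := by
  have hderiv (t : ℝ) : HasDerivAt (fun t => 1 - t ^ 2 / 2 + t ^ 4 / 24 - cos t)
      (sin t - (t - t ^ 3 / 6)) t :=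
    (((((hasDerivAt_pow 2 t).div_const 2).const_sub 1).add
      ((hasDerivAt_pow 4 t).div_const 24)).sub (hasDerivAt_cos t)).congr_deriv
      (by norm_num; ring)
  have := nonneg_of_hasDerivAt_nonneg (fun t _ => hderiv t) (by simp)
    (fun t ht => sub_nonneg.2 (sin_ge_sub_cube ht)) hx
  linarith

lemma sin_le_taylor5 (hx : 0 ≤ x) : sin x ≤ x - x ^ 3 / 6 + x ^ 5 / 120 := by
  have hderiv (t : ℝ) : HasDerivAt (fun t => t - t ^ 3 / 6 + t ^ 5 / 120 - sin t)
      (1 - t ^ 2 / 2 + t ^ 4 / 24 - cos t) t :=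
    ((((hasDerivAt_id t).sub ((hasDerivAt_pow 3 t).div_const 6)).add
      ((hasDerivAt_pow 5 t).div_const 120)).sub (hasDerivAt_sin t)).congr_deriv
      (by norm_num; ring)
  have := nonneg_of_hasDerivAt_nonneg (fun t _ => hderiv t) (by simp)
    (fun t ht => sub_nonneg.2 (cos_le_taylor4 ht)) hx
  linarith

lemma taylor6_le_cos (hx : 0 ≤ x) : 1 - x ^ 2 / 2 + x ^ 4 / 24 - x ^ 6 / 720 ≤ cos x := by
  have hderiv (t : ℝ) :
      HasDerivAt (fun t => cos t - (1 - t ^ 2 / 2 + t ^ 4 / 24 - t ^ 6 / 720))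
        (t - t ^ 3 / 6 + t ^ 5 / 120 - sin t) t :=
    ((hasDerivAt_cos t).sub (((((hasDerivAt_pow 2 t).div_const 2).const_sub 1).add
      ((hasDerivAt_pow 4 t).div_const 24)).sub ((hasDerivAt_pow 6 t).div_const 720))).congr_deriv
      (by norm_num; ring)
  have := nonneg_of_hasDerivAt_nonneg (fun t _ => hderiv t) (by simp)
    (fun t ht => sub_nonneg.2 (sin_le_taylor5 ht)) hx
  linarith

lemma taylor7_le_sin (hx : 0 ≤ x) : x - x ^ 3 / 6 + x ^ 5 / 120 - x ^ 7 / 5040 ≤ sin x := by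
  have hderiv (t : ℝ) :
      HasDerivAt (fun t => sin t - (t - t ^ 3 / 6 + t ^ 5 / 120 - t ^ 7 / 5040))
        (cos t - (1 - t ^ 2 / 2 + t ^ 4 / 24 - t ^ 6 / 720)) t :=
    ((hasDerivAt_sin t).sub ((((hasDerivAt_id t).sub ((hasDerivAt_pow 3 t).div_const 6)).add
      ((hasDerivAt_pow 5 t).div_const 120)).sub ((hasDerivAt_pow 7 t).div_const 5040))).congr_deriv
      (by norm_num; ring)
  have := nonneg_of_hasDerivAt_nonneg (fun t _ => hderiv t) (by simp)
    (fun t ht => sub_nonneg.2 (taylor6_le_cos ht)) hx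
  linarith

end

lemma chebyshev_U_sub_one_eval_cos (n : ℤ) {θ : ℝ} (hθ : sin θ ≠ 0) :
    (Polynomial.Chebyshev.U ℝ (n - 1)).eval (cos θ) = sin (n * θ) / sin θ := by
  rw [eq_div_iff hθ, Polynomial.Chebyshev.U_real_cos]
  push_cast
  ring_nf

section

variable {q y : ℝ}

lemma one_div_sin_pi_div_lt (hq : 1 < q) : 1 / sin (π / (2 * q)) < q := by
  have hq₀ : 0 < q := by linarith
  have hx₀ : 0 < π / (2 * q) := by positivity
  have hsin₀ : 0 < sin (π / (2 * q)) := sin_pos_of_pos_of_lt_pi hx₀ (by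
    rw [div_lt_iff₀ (by positivity)]; nlinarith [pi_pos])
  have h := mul_lt_sin hx₀ (div_lt_div_of_pos_left pi_pos (by norm_num) (by linarith))
  rw [show 2 / π * (π / (2 * q)) = 1 / q by field_simp] at h
  rwa [div_lt_iff₀ hsin₀, mul_comm, ← div_lt_iff₀ hq₀]

lemma lt_one_div_sin_pi_div (hq : 1 / 2 < q) : 2 * q / π < 1 / sin (π / (2 * q)) := by
  have hx₀ : 0 < π / (2 * q) := div_pos pi_pos (by linarith)
  have hsin₀ : 0 < sin (π / (2 * q)) := sin_pos_of_pos_of_lt_pi hx₀ (by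
    rw [div_lt_iff₀ (by linarith)]; nlinarith [pi_pos])
  simpa using one_div_lt_one_div_of_lt hsin₀ (sin_lt hx₀)

noncomputable def upperCoeff (q : ℝ) : ℝ := 4 / π ^ 2 * (q - 1 / sin (π / (2 * q))) * q

lemma upperCoeff_pos (hq : 1 < q) : 0 < upperCoeff q := by
  have := sub_pos.2 (one_div_sin_pi_div_lt hq)
  have : 0 < q := by linarith
  unfold upperCoeff
  positivity

lemma upperCoeff_lt (hq : 1 / 2 < q) : upperCoeff q < q ^ 2 / 5 := by
  have hq₀ : 0 < q := by linarith
  have hπ : 4 * (π - 2) / π ^ 3 < 1 / 5 := by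
    rw [div_lt_div_iff₀ (by positivity) (by norm_num)]
    have : (3 : ℝ) ^ 3 < π ^ 3 := pow_lt_pow_left₀ pi_gt_three (by norm_num) (by norm_num)
    linarith [pi_lt_d2]
  have hsin := lt_one_div_sin_pi_div hq
  calc upperCoeff q < 4 / π ^ 2 * (q - 2 * q / π) * q := by unfold upperCoeff; gcongr
    _ = 4 * (π - 2) / π ^ 3 * q ^ 2 := by field_simp
    _ < 1 / 5 * q ^ 2 := mul_lt_mul_of_pos_right hπ (by positivity)
    _ = q ^ 2 / 5 := by ring

lemma mul_taylor5_lt_taylor7_mul (hq : 2 ≤ q) (hy : 0 < y) (hqy : q * y < 2) :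
    q / 6 * ((1 - q ^ 2) * y ^ 2 + 6) * (y - y ^ 3 / 6 + y ^ 5 / 120) <
      q * y - (q * y) ^ 3 / 6 + (q * y) ^ 5 / 120 - (q * y) ^ 7 / 5040 := by
  have hqy2 : q ^ 2 * y ^ 2 < 4 := by nlinarith [mul_pos (by linarith : (0 : ℝ) < q) hy]
  have hkey : y ^ 2 * (q ^ 6 - 7 * q ^ 2 + 7) < 14 * (3 * q ^ 4 - 10 * q ^ 2 + 7) := by
    have hq2 : 4 ≤ q ^ 2 := by nlinarith
    have hpos : 0 < q ^ 6 - 7 * q ^ 2 + 7 := by nlinarith [sq_nonneg (q ^ 2 - 4)]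
    have h1 := mul_lt_mul_of_pos_right hqy2 hpos
    have h2 : 4 * (q ^ 6 - 7 * q ^ 2 + 7) ≤ q ^ 2 * (14 * (3 * q ^ 4 - 10 * q ^ 2 + 7)) := by
      nlinarith [mul_nonneg (mul_nonneg (sq_nonneg q) (sq_nonneg q)) (sub_nonneg.2 hq2)]
    nlinarith
  have hdiff : q * y - (q * y) ^ 3 / 6 + (q * y) ^ 5 / 120 - (q * y) ^ 7 / 5040 -
      q / 6 * ((1 - q ^ 2) * y ^ 2 + 6) * (y - y ^ 3 / 6 + y ^ 5 / 120) =
      q * y ^ 5 / 5040 *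
        (14 * (3 * q ^ 4 - 10 * q ^ 2 + 7) - y ^ 2 * (q ^ 6 - 7 * q ^ 2 + 7)) := by
    ring
  have hq₀ : 0 < q := by linarith
  have := sub_pos.2 hkey
  have : 0 < q * y ^ 5 / 5040 *
      (14 * (3 * q ^ 4 - 10 * q ^ 2 + 7) - y ^ 2 * (q ^ 6 - 7 * q ^ 2 + 7)) := by
    positivity
  linarith

lemma mul_sin_lt_sin_mul (hq : 2 ≤ q) (hy : 0 < y) (hqy : q * y < 2) :
    q / 6 * ((1 - q ^ 2) * y ^ 2 + 6) * sin y < sin (q * y) := by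
  have hfactor : 0 ≤ q / 6 * ((1 - q ^ 2) * y ^ 2 + 6) := by
    have : q ^ 2 * y ^ 2 < 4 := by nlinarith [mul_pos (by linarith : (0 : ℝ) < q) hy]
    have : 0 < q := by linarith
    nlinarith
  calc q / 6 * ((1 - q ^ 2) * y ^ 2 + 6) * sin y
      ≤ q / 6 * ((1 - q ^ 2) * y ^ 2 + 6) * (y - y ^ 3 / 6 + y ^ 5 / 120) :=
        mul_le_mul_of_nonneg_left (sin_le_taylor5 hy.le) hfactor
    _ < q * y - (q * y) ^ 3 / 6 + (q * y) ^ 5 / 120 - (q * y) ^ 7 / 5040 :=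
        mul_taylor5_lt_taylor7_mul hq hy hqy
    _ ≤ sin (q * y) := taylor7_le_sin (by nlinarith)

variable {c : ℝ}

lemma taylor5_mul_lt_mul_taylor3 (hq : 2 ≤ q) (hy : 0 < y) (hqy : q * y < 8 / 5) (hc : 0 < c)
    (hcq : c < q ^ 2 / 5) :
    q * y - (q * y) ^ 3 / 6 + (q * y) ^ 5 / 120 < (q - c * y ^ 2) * (y - y ^ 3 / 6) := by
  have hqy2 : q ^ 2 * y ^ 2 < 64 / 25 := by nlinarith [mul_pos (by linarith : (0 : ℝ) < q) hy]
  have hcoef : c + q ^ 5 * y ^ 2 / 120 < (q ^ 3 - q) / 6 := by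
    have := mul_lt_mul_of_pos_left hqy2 (by positivity : (0 : ℝ) < q ^ 3)
    nlinarith [mul_nonneg (by linarith : (0 : ℝ) ≤ q)
      (mul_nonneg (sub_nonneg.2 hq) (sub_nonneg.2 hq))]
  have hdiff : (q - c * y ^ 2) * (y - y ^ 3 / 6) - (q * y - (q * y) ^ 3 / 6 + (q * y) ^ 5 / 120) =
      y ^ 3 * ((q ^ 3 - q) / 6 - (c + q ^ 5 * y ^ 2 / 120)) + c * y ^ 5 / 6 := by
    ring
  have := sub_pos.2 hcoef
  have : 0 < y ^ 3 * ((q ^ 3 - q) / 6 - (c + q ^ 5 * y ^ 2 / 120)) + c * y ^ 5 / 6 := by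
    positivity
  linarith

lemma sin_mul_lt_mul_sin (hq : 2 ≤ q) (hy : 0 < y) (hqy : q * y < 8 / 5) (hc : 0 < c)
    (hcq : c < q ^ 2 / 5) : sin (q * y) < (q - c * y ^ 2) * sin y := by
  have hfactor : 0 ≤ q - c * y ^ 2 := by
    have : q ^ 2 * y ^ 2 < 64 / 25 := by nlinarith [mul_pos (by linarith : (0 : ℝ) < q) hy]
    nlinarith [mul_lt_mul_of_pos_right hcq (by positivity : (0 : ℝ) < y ^ 2)]
  calc sin (q * y) ≤ q * y - (q * y) ^ 3 / 6 + (q * y) ^ 5 / 120 := sin_le_taylor5 (by nlinarith)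
    _ < (q - c * y ^ 2) * (y - y ^ 3 / 6) := taylor5_mul_lt_mul_taylor3 hq hy hqy hc hcq
    _ ≤ (q - c * y ^ 2) * sin y := mul_le_mul_of_nonneg_left (sin_ge_sub_cube hy.le) hfactor

end

theorem stmt_18 (p : ℕ) (hp : 2 ≤ p) (y : ℝ) (hy0 : 0 < y) (hy1 : y < π / (2 * p)) :
    (p : ℝ) / 6 * ((1 - (p : ℝ) ^ 2) * y ^ 2 + 6) <
        (Polynomial.Chebyshev.U ℝ ((p : ℤ) - 1)).eval (cos y) ∧
      (Polynomial.Chebyshev.U ℝ ((p : ℤ) - 1)).eval (cos y) <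
        (p : ℝ) - 4 / π ^ 2 * ((p : ℝ) - 1 / sin (π / (2 * p))) * p * y ^ 2 := by
  have hp' : (2 : ℝ) ≤ p := by exact_mod_cast hp
  have hpy : p * y < π / 2 := by
    rw [lt_div_iff₀ (by positivity)] at hy1
    linarith
  have hpy' : p * y < 8 / 5 := by linarith [pi_lt_d2]
  have hsin : 0 < sin y := sin_pos_of_pos_of_lt_pi hy0 (by nlinarith [pi_pos])
  rw [chebyshev_U_sub_one_eval_cos _ hsin.ne', Int.cast_natCast, lt_div_iff₀ hsin,
    div_lt_iff₀ hsin]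
  exact ⟨mul_sin_lt_sin_mul hp' hy0 (by linarith), sin_mul_lt_mul_sin hp' hy0 hpy'
    (upperCoeff_pos (by linarith)) (upperCoeff_lt (by linarith))⟩
end
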